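/- arXiv:1708.08095 — 6 statements merged into one kernel-verified Lean document; each statement's English description precedes it below -/
import Mathlib

section
/- Let n be a positive integer, N = 2n, and let ε = (ε_1, ..., ε_N) be uniformly distributed on Ω = {ε ∈ {−1,1}^N : Σ_{i=1}^N ε_i = 0}, with expectation denoted E_S. Then for every a = (a_1, ..., a_N) ∈ ℝ^N, every real p ≥ 2, and b = (1/N) Σ_{i=1}^N a_i, one has (E_S |Σ_{i=1}^N a_i ε_i|^p)^{1/p} ≤ √(2p) · (Σ_{i=1}^N a_i² − N b²)^{1/2}. -/
/-- The set `Ω = {ε ∈ {-1,1}^N : ∑ ε_i = 0}`. -/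
def Omega (N : ℕ) : Finset (Fin N → ℤ) :=
  (Fintype.piFinset fun _ : Fin N => ({-1, 1} : Finset ℤ)).filter fun ε => ∑ i, ε i = 0

/-- Expectation with respect to the uniform distribution on `Ω`. -/
noncomputable def ES (N : ℕ) (g : (Fin N → ℤ) → ℝ) : ℝ :=
  (∑ ε ∈ Omega N, g ε) / ((Omega N).card : ℝ)

/-!
Since `∑ εᵢ = 0` on `Ω`, replacing `a` by `c = a - b` leaves `∑ aᵢ εᵢ` unchanged, and
`‖c‖₂² = ∑ aᵢ² - N b²`. The set `Ω` is a single orbit of the permutations of coordinates, so a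
uniform `ε ∈ Ω` is distributed as `ε' ∘ π` for any fixed `ε' ∈ Ω` and a uniform permutation `π`.
Averaging also over `ε' = (s, -s)` with `s ∈ {±1}ⁿ` uniform, for fixed `π` the sum becomes a
Rademacher sum `∑ₗ dₗ sₗ` with `‖d‖₂² ≤ 2 ‖c‖₂²`. Khintchine's inequality with the Gaussian
constant `(2m-1)!! ≤ mᵐ` bounds its `2m`-th moment, and for `m = ⌈p/2⌉ ≤ p` the monotonicity of
`Lᵖ` norms gives `√(2p) ‖c‖₂`.
-/

open Finset
open Equiv (Perm)
open scoped Nat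

noncomputable def gaussianMoment (m : ℕ) : ℝ := (2 * m)! / (2 ^ m * m !)

lemma gaussianMoment_nonneg (m : ℕ) : 0 ≤ gaussianMoment m := by
  unfold gaussianMoment; positivity

lemma gaussianMoment_le_pow (m : ℕ) : gaussianMoment m ≤ (m : ℝ) ^ m := by
  have hfact : (2 * m)! ≤ m ! * (2 * m) ^ m := by
    have h := Nat.factorial_mul_descFactorial (show m ≤ 2 * m by omega)
    rw [show 2 * m - m = m by omega] at h
    rw [← h]
    exact Nat.mul_le_mul_left _ (Nat.descFactorial_le_pow _ _)
  rw [gaussianMoment, div_le_iff₀ (by positivity)]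
  calc ((2 * m)! : ℝ) ≤ m ! * (2 * m) ^ m := by exact_mod_cast hfact
    _ = m ^ m * (2 ^ m * m !) := by ring

lemma choose_mul_gaussianMoment_le {m j : ℕ} (h : j ≤ m) :
    ((2 * m).choose (2 * j) : ℝ) * gaussianMoment (m - j) ≤ gaussianMoment m * m.choose j := by
  have hdf : ((2 ^ j * j ! : ℕ) : ℝ) ≤ (2 * j)! := by
    exact_mod_cast Nat.doubleFactorial_two_mul j ▸ Nat.doubleFactorial_le_factorial (2 * j)
  have h2 : 2 * (m - j) = 2 * m - 2 * j := by omega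
  rw [gaussianMoment, gaussianMoment, Nat.cast_choose ℝ (by omega : 2 * j ≤ 2 * m),
    Nat.cast_choose ℝ h, h2, show (2 : ℝ) ^ m = 2 ^ j * 2 ^ (m - j) by
      rw [← pow_add, Nat.add_sub_cancel' h]]
  push_cast at hdf
  calc ((2 * m)! : ℝ) / ((2 * j)! * (2 * m - 2 * j)!) *
        ((2 * m - 2 * j)! / (2 ^ (m - j) * (m - j)!))
      = (2 * m)! / (2 * j)! / (2 ^ (m - j) * (m - j)!) := by field_simp
    _ ≤ (2 * m)! / (2 ^ j * j !) / (2 ^ (m - j) * (m - j)!) := by gcongr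
    _ = (2 * m)! / (2 ^ j * 2 ^ (m - j) * m !) * (m ! / (j ! * (m - j)!)) := by field_simp

lemma sum_range_two_mul_add_one {M : Type*} [AddCommMonoid M] (f : ℕ → M) (m : ℕ) :
    ∑ k ∈ range (2 * m + 1), f k =
      ∑ j ∈ range (m + 1), f (2 * j) + ∑ j ∈ range m, f (2 * j + 1) := by
  induction m with
  | zero => simp
  | succ m ih =>
    rw [show 2 * (m + 1) + 1 = 2 * m + 1 + 1 + 1 by ring, sum_range_succ, sum_range_succ, ih,
      sum_range_succ (fun j => f (2 * j)) (m + 1), sum_range_succ (fun j => f (2 * j + 1)) m,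
      show 2 * (m + 1) = 2 * m + 1 + 1 by ring]
    abel

lemma add_pow_add_neg_add_pow {R : Type*} [CommRing R] (x y : R) (m : ℕ) :
    (x + y) ^ (2 * m) + (-x + y) ^ (2 * m) =
      ∑ j ∈ range (m + 1), 2 * ((2 * m).choose (2 * j) : R) * (x ^ 2) ^ j * y ^ (2 * (m - j)) := by
  rw [add_pow, add_pow, ← sum_add_distrib, sum_range_two_mul_add_one,
    sum_eq_zero (s := range m) fun j _ => by rw [(odd_two_mul_add_one j).neg_pow]; ring, add_zero]
  refine sum_congr rfl fun j _ => ?_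
  rw [(even_two_mul j).neg_pow, show 2 * m - 2 * j = 2 * (m - j) by omega, ← pow_mul]
  ring

lemma sum_units_int {M : Type*} [AddCommMonoid M] (g : ℤˣ → M) : ∑ u, g u = g 1 + g (-1) := by
  rw [show (univ : Finset ℤˣ) = {1, -1} from rfl, sum_pair (by decide)]

lemma sum_fin_succ_units {M : Type*} [AddCommMonoid M] {k : ℕ} (f : (Fin (k + 1) → ℤˣ) → M) :
    ∑ s, f s = ∑ s : Fin k → ℤˣ, (f (Fin.cons 1 s) + f (Fin.cons (-1) s)) := by
  rw [← (Fin.consEquiv fun _ => ℤˣ).sum_comp, Fintype.sum_prod_type, sum_units_int,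
    sum_add_distrib]
  rfl

theorem sum_rademacher_pow_le {k : ℕ} (d : Fin k → ℝ) (m : ℕ) :
    ∑ s : Fin k → ℤˣ, (∑ i, d i * (s i : ℤ)) ^ (2 * m) ≤
      2 ^ k * gaussianMoment m * (∑ i, d i ^ 2) ^ m := by
  induction k generalizing m with
  | zero =>
    rcases m.eq_zero_or_pos with rfl | hm
    · simp [gaussianMoment]
    · simp [zero_pow hm.ne', zero_pow (by omega : 2 * m ≠ 0)]
  | succ k ih =>
    set x := d 0 ^ 2
    set t := ∑ i : Fin k, d i.succ ^ 2
    set Y := fun s : Fin k → ℤˣ => ∑ i : Fin k, d i.succ * (s i : ℤ)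
    calc ∑ s : Fin (k + 1) → ℤˣ, (∑ i, d i * (s i : ℤ)) ^ (2 * m)
        = ∑ s, ∑ j ∈ range (m + 1), 2 * ((2 * m).choose (2 * j) : ℝ) * x ^ j *
            Y s ^ (2 * (m - j)) := by
          rw [sum_fin_succ_units]
          refine sum_congr rfl fun s _ => ?_
          simp only [Fin.sum_univ_succ, Fin.cons_zero, Fin.cons_succ, Units.val_one,
            Units.val_neg, Int.cast_one, Int.cast_neg, mul_one, mul_neg, Y]
          exact add_pow_add_neg_add_pow _ _ m
      _ = ∑ j ∈ range (m + 1), 2 * ((2 * m).choose (2 * j) : ℝ) * x ^ j *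
            ∑ s, Y s ^ (2 * (m - j)) := by
          rw [sum_comm]
          simp only [mul_sum]
      _ ≤ ∑ j ∈ range (m + 1), 2 * ((2 * m).choose (2 * j) : ℝ) * x ^ j *
            (2 ^ k * gaussianMoment (m - j) * t ^ (m - j)) := by
          gcongr with j
          exact ih _ _
      _ ≤ ∑ j ∈ range (m + 1),
            2 ^ (k + 1) * gaussianMoment m * (x ^ j * t ^ (m - j) * m.choose j) := by
          refine sum_le_sum fun j hj => ?_
          have := choose_mul_gaussianMoment_le (Nat.lt_succ_iff.mp (mem_range.mp hj))
          calc _ = 2 ^ (k + 1) * (x ^ j * t ^ (m - j)) *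
                (((2 * m).choose (2 * j) : ℝ) * gaussianMoment (m - j)) := by ring
            _ ≤ 2 ^ (k + 1) * (x ^ j * t ^ (m - j)) * (gaussianMoment m * m.choose j) := by gcongr
            _ = _ := by ring
      _ = 2 ^ (k + 1) * gaussianMoment m * (∑ i, d i ^ 2) ^ m := by
          rw [← mul_sum, ← add_pow, Fin.sum_univ_succ]

section PermOrbit

variable {ι α : Type*} [Fintype ι] [DecidableEq ι] [DecidableEq α]

def permOrbit (ε₀ : ι → α) : Finset (ι → α) :=
  univ.image fun π : Perm ι => ε₀ ∘ π

lemma comp_perm_mem_permOrbit {ε₀ ε : ι → α} (hε : ε ∈ permOrbit ε₀) (τ : Perm ι) :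
    ε ∘ τ ∈ permOrbit ε₀ := by
  obtain ⟨π, -, rfl⟩ := mem_image.mp hε
  exact mem_image.mpr ⟨π * τ, mem_univ _, rfl⟩

lemma sum_permOrbit_comp_perm {M : Type*} [AddCommMonoid M] (ε₀ : ι → α) (g : (ι → α) → M)
    (τ : Perm ι) : ∑ ε ∈ permOrbit ε₀, g (ε ∘ τ) = ∑ ε ∈ permOrbit ε₀, g ε :=
  sum_nbij' (· ∘ τ) (· ∘ τ.symm) (fun _ hε => comp_perm_mem_permOrbit hε τ)
    (fun _ hε => comp_perm_mem_permOrbit hε τ.symm)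
    (fun ε _ => by ext; simp) (fun ε _ => by ext; simp) fun _ _ => rfl

lemma sum_perm_comp_of_mem_permOrbit {M : Type*} [AddCommMonoid M] {ε₀ ε : ι → α}
    (hε : ε ∈ permOrbit ε₀) (g : (ι → α) → M) :
    ∑ π : Perm ι, g (ε ∘ π) = ∑ π : Perm ι, g (ε₀ ∘ π) := by
  obtain ⟨τ, -, rfl⟩ := mem_image.mp hε
  exact Equiv.sum_comp (Equiv.mulLeft τ) fun π : Perm ι => g (ε₀ ∘ π)

theorem sum_permOrbit_div_card (ε₀ : ι → α) (g : (ι → α) → ℝ) :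
    (∑ ε ∈ permOrbit ε₀, g ε) / #(permOrbit ε₀) =
      (∑ π : Perm ι, g (ε₀ ∘ π)) / Fintype.card (Perm ι) := by
  have hS : (#(permOrbit ε₀) : ℝ) ≠ 0 :=
    Nat.cast_ne_zero.mpr (card_ne_zero_of_mem (mem_image.mpr ⟨1, mem_univ _, rfl⟩))
  have hG : (Fintype.card (Perm ι) : ℝ) ≠ 0 := Nat.cast_ne_zero.mpr Fintype.card_ne_zero
  have key : Fintype.card (Perm ι) * ∑ ε ∈ permOrbit ε₀, g ε =
      #(permOrbit ε₀) * ∑ π : Perm ι, g (ε₀ ∘ π) :=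
    calc Fintype.card (Perm ι) * ∑ ε ∈ permOrbit ε₀, g ε
        = ∑ π : Perm ι, ∑ ε ∈ permOrbit ε₀, g (ε ∘ π) := by
          simp [sum_permOrbit_comp_perm]
      _ = ∑ ε ∈ permOrbit ε₀, ∑ π : Perm ι, g (ε₀ ∘ π) := by
          rw [sum_comm]
          exact sum_congr rfl fun ε hε => sum_perm_comp_of_mem_permOrbit hε g
      _ = #(permOrbit ε₀) * ∑ π : Perm ι, g (ε₀ ∘ π) := by simp
  rw [div_eq_div_iff hS hG]
  linarith
end PermOrbit

section Omega

variable {N : ℕ}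

lemma eq_neg_one_or_eq_one_of_mem_Omega {ε : Fin N → ℤ} (hε : ε ∈ Omega N) (i : Fin N) :
    ε i = -1 ∨ ε i = 1 := by
  simpa using Fintype.mem_piFinset.mp (mem_filter.mp hε).1 i

lemma comp_perm_mem_Omega {ε : Fin N → ℤ} (hε : ε ∈ Omega N) (π : Perm (Fin N)) :
    ε ∘ π ∈ Omega N := by
  refine mem_filter.mpr ⟨Fintype.mem_piFinset.mpr fun i => ?_, ?_⟩
  · simpa using eq_neg_one_or_eq_one_of_mem_Omega hε (π i)
  · rw [Function.comp_def, Equiv.sum_comp π ε]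
    exact (mem_filter.mp hε).2

lemma two_mul_card_filter_eq_one_of_mem_Omega {ε : Fin N → ℤ} (hε : ε ∈ Omega N) :
    2 * #{i | ε i = 1} = N := by
  have h : ∑ i, ε i = ∑ i, (2 * (if ε i = 1 then 1 else 0) - 1) :=
    sum_congr rfl fun i _ => by
      rcases eq_neg_one_or_eq_one_of_mem_Omega hε i with hi | hi <;> simp [hi]
  rw [(mem_filter.mp hε).2, sum_sub_distrib, ← mul_sum, sum_boole] at h
  simp at h
  omega

lemma exists_perm_eq_comp_of_mem_Omega {ε ε' : Fin N → ℤ} (hε : ε ∈ Omega N) (hε' : ε' ∈ Omega N) :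
    ∃ π : Perm (Fin N), ε' = ε ∘ π := by
  obtain ⟨σ, hσ⟩ := Perm.exists_map_finset_eq {i | ε i = 1} {i | ε' i = 1} (by
    have := two_mul_card_filter_eq_one_of_mem_Omega hε
    have := two_mul_card_filter_eq_one_of_mem_Omega hε'
    omega)
  refine ⟨σ.symm, funext fun i => ?_⟩
  have hi : ε' i = 1 ↔ ε (σ.symm i) = 1 := by
    simpa [mem_map_equiv] using (Finset.ext_iff.mp hσ i).symm
  rcases eq_neg_one_or_eq_one_of_mem_Omega hε (σ.symm i) with h | h <;>
    rcases eq_neg_one_or_eq_one_of_mem_Omega hε' i with h' | h' <;> simp_all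

lemma Omega_eq_permOrbit {ε₀ : Fin N → ℤ} (h₀ : ε₀ ∈ Omega N) : Omega N = permOrbit ε₀ := by
  ext ε
  refine ⟨fun hε => ?_, fun hε => ?_⟩
  · obtain ⟨π, rfl⟩ := exists_perm_eq_comp_of_mem_Omega h₀ hε
    exact mem_image.mpr ⟨π, mem_univ _, rfl⟩
  · obtain ⟨π, -, rfl⟩ := mem_image.mp hε
    exact comp_perm_mem_Omega h₀ π

lemma ES_eq_sum_perm_div {ε₀ : Fin N → ℤ} (h₀ : ε₀ ∈ Omega N) (g : (Fin N → ℤ) → ℝ) :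
    ES N g = (∑ π : Perm (Fin N), g (ε₀ ∘ π)) / Fintype.card (Perm (Fin N)) := by
  rw [ES, Omega_eq_permOrbit h₀, sum_permOrbit_div_card]

lemma ES_congr {g g' : (Fin N → ℤ) → ℝ} (h : ∀ ε ∈ Omega N, g ε = g' ε) : ES N g = ES N g' := by
  rw [ES, ES, sum_congr rfl h]

lemma ES_nonneg {g : (Fin N → ℤ) → ℝ} (hg : ∀ ε, 0 ≤ g ε) : 0 ≤ ES N g :=
  div_nonneg (sum_nonneg fun ε _ => hg ε) (Nat.cast_nonneg _)

lemma ES_rpow_le {g : (Fin N → ℤ) → ℝ} (hg : ∀ ε, 0 ≤ g ε) {r : ℝ} (hr : 1 ≤ r) :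
    ES N g ^ r ≤ ES N fun ε => g ε ^ r := by
  rcases (Omega N).eq_empty_or_nonempty with h | h
  · simp [ES, h, Real.zero_rpow (by linarith : r ≠ 0)]
  have hw : ∑ _ε ∈ Omega N, ((#(Omega N) : ℝ))⁻¹ = 1 := by
    rw [sum_const, nsmul_eq_mul, mul_inv_cancel₀ (Nat.cast_ne_zero.mpr h.card_pos.ne')]
  simpa only [ES, div_eq_inv_mul, mul_sum] using Real.rpow_arith_mean_le_arith_mean_rpow
    (Omega N) (fun _ => ((#(Omega N) : ℝ))⁻¹) g (fun _ _ => by positivity) hw (fun ε _ => hg ε) hr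

lemma ES_abs_rpow_root_le_of_exponent_le (X : (Fin N → ℤ) → ℝ) {p q : ℝ} (hp : 0 < p) (hpq : p ≤ q) :
    ES N (fun ε => |X ε| ^ p) ^ (1 / p) ≤ ES N (fun ε => |X ε| ^ q) ^ (1 / q) := by
  have hq : 0 < q := hp.trans_le hpq
  have hE := ES_nonneg (N := N) fun ε => Real.rpow_nonneg (abs_nonneg (X ε)) p
  calc ES N (fun ε => |X ε| ^ p) ^ (1 / p) = (ES N (fun ε => |X ε| ^ p) ^ (q / p)) ^ (1 / q) := by
        rw [← Real.rpow_mul hE]; congr 1; field_simp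
    _ ≤ ES N (fun ε => (|X ε| ^ p) ^ (q / p)) ^ (1 / q) := by
        gcongr
        exact ES_rpow_le (fun ε => Real.rpow_nonneg (abs_nonneg _) p) ((one_le_div hp).mpr hpq)
    _ = ES N (fun ε => |X ε| ^ q) ^ (1 / q) := by
        congr 2; ext ε
        rw [← Real.rpow_mul (abs_nonneg _), mul_div_cancel₀ _ hp.ne']

end Omega

def halvesEquiv (n : ℕ) : Fin n ⊕ Fin n ≃ Fin (2 * n) :=
  finSumFinEquiv.trans (finCongr (two_mul n).symm)

lemma sum_fin_two_mul {M : Type*} [AddCommMonoid M] {n : ℕ} (f : Fin (2 * n) → M) :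
    ∑ i, f i = ∑ l, (f (halvesEquiv n (.inl l)) + f (halvesEquiv n (.inr l))) := by
  rw [← (halvesEquiv n).sum_comp, Fintype.sum_sum_type, sum_add_distrib]

def pairedSigns (n : ℕ) (s : Fin n → ℤˣ) : Fin (2 * n) → ℤ :=
  Sum.elim (fun l => (s l : ℤ)) (fun l => -(s l : ℤ)) ∘ (halvesEquiv n).symm

lemma pairedSigns_mem_Omega {n : ℕ} (s : Fin n → ℤˣ) : pairedSigns n s ∈ Omega (2 * n) := by
  refine mem_filter.mpr ⟨Fintype.mem_piFinset.mpr fun i => ?_, ?_⟩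
  · rcases h : (halvesEquiv n).symm i with l | l <;>
      rcases Int.units_eq_one_or (s l) with hs | hs <;> simp [pairedSigns, h, hs]
  · simp [sum_fin_two_mul, pairedSigns]

lemma sum_mul_pairedSigns {n : ℕ} (c : Fin (2 * n) → ℝ) (s : Fin n → ℤˣ) :
    ∑ i, c i * pairedSigns n s i =
      ∑ l, (c (halvesEquiv n (.inl l)) - c (halvesEquiv n (.inr l))) * (s l : ℤ) := by
  simp only [sum_fin_two_mul, pairedSigns, Function.comp_apply, Equiv.symm_apply_apply,
    Sum.elim_inl, Sum.elim_inr, Int.cast_neg]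
  exact sum_congr rfl fun l _ => by ring

lemma sum_sub_halves_sq_le {n : ℕ} (c : Fin (2 * n) → ℝ) :
    ∑ l, (c (halvesEquiv n (.inl l)) - c (halvesEquiv n (.inr l))) ^ 2 ≤ 2 * ∑ i, c i ^ 2 := by
  rw [sum_fin_two_mul, mul_sum]
  exact sum_le_sum fun l _ => by
    nlinarith [sq_nonneg (c (halvesEquiv n (.inl l)) + c (halvesEquiv n (.inr l)))]

lemma sum_units_pow_pairedSigns_le {n : ℕ} (c : Fin (2 * n) → ℝ) (m : ℕ) (π : Perm (Fin (2 * n))) :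
    ∑ s : Fin n → ℤˣ, (∑ i, c i * pairedSigns n s (π i)) ^ (2 * m) ≤
      2 ^ n * gaussianMoment m * (2 * ∑ i, c i ^ 2) ^ m := by
  have hπ : ∀ s, ∑ i, c i * pairedSigns n s (π i) = ∑ i, c (π.symm i) * pairedSigns n s i :=
    fun s => by
      rw [← Equiv.sum_comp π fun j => c (π.symm j) * (pairedSigns n s j : ℝ)]
      simp
  have hc : ∑ i, c (π.symm i) ^ 2 = ∑ i, c i ^ 2 := π.symm.sum_comp fun i => c i ^ 2
  simp only [hπ, sum_mul_pairedSigns]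
  refine (sum_rademacher_pow_le _ m).trans ?_
  gcongr
  · exact mul_nonneg (by positivity) (gaussianMoment_nonneg m)
  · rw [← hc]
    exact sum_sub_halves_sq_le fun i => c (π.symm i)

theorem ES_sum_mul_pow_le {n : ℕ} (c : Fin (2 * n) → ℝ) (m : ℕ) :
    ES (2 * n) (fun ε => (∑ i, c i * ε i) ^ (2 * m)) ≤
      gaussianMoment m * (2 * ∑ i, c i ^ 2) ^ m := by
  set g := fun ε : Fin (2 * n) → ℤ => (∑ i, c i * ε i) ^ (2 * m)
  have hG : (Fintype.card (Perm (Fin (2 * n))) : ℝ) ≠ 0 :=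
    Nat.cast_ne_zero.mpr Fintype.card_ne_zero
  have hcard : Fintype.card (Fin n → ℤˣ) = 2 ^ n := by simp
  calc ES (2 * n) g = (∑ _s : Fin n → ℤˣ, ES (2 * n) g) / 2 ^ n := by
        rw [sum_const, card_univ, hcard, nsmul_eq_mul]; push_cast; field_simp
    _ = (∑ π : Perm (Fin (2 * n)), ∑ s : Fin n → ℤˣ, g (pairedSigns n s ∘ π)) /
          (Fintype.card (Perm (Fin (2 * n))) * 2 ^ n) := by
        rw [sum_congr rfl fun s _ => ES_eq_sum_perm_div (pairedSigns_mem_Omega s) g, ← sum_div,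
          sum_comm, div_div]
    _ ≤ (∑ _π : Perm (Fin (2 * n)), 2 ^ n * gaussianMoment m * (2 * ∑ i, c i ^ 2) ^ m) /
          (Fintype.card (Perm (Fin (2 * n))) * 2 ^ n) := by
        gcongr with π
        exact sum_units_pow_pairedSigns_le c m π
    _ = gaussianMoment m * (2 * ∑ i, c i ^ 2) ^ m := by
        rw [sum_const, card_univ, nsmul_eq_mul]; field_simp

theorem ES_abs_sum_mul_rpow_le {n : ℕ} (c : Fin (2 * n) → ℝ) {p : ℝ} (hp : 2 ≤ p) :
    ES (2 * n) (fun ε => |∑ i, c i * ε i| ^ p) ^ (1 / p) ≤ √(2 * p) * √(∑ i, c i ^ 2) := by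
  set m := ⌈p / 2⌉₊
  set T := ∑ i, c i ^ 2
  have hpm : p ≤ 2 * m := by linarith [Nat.le_ceil (p / 2)]
  have hmp : (m : ℝ) ≤ p := by linarith [Nat.ceil_lt_add_one (by linarith : 0 ≤ p / 2)]
  have hm : (0 : ℝ) < m := by linarith
  have hT : 0 ≤ T := by positivity
  have hE := ES_nonneg (N := 2 * n) fun ε => (even_two_mul m).pow_nonneg (∑ i, c i * ε i)
  have hmoment : ES (2 * n) (fun ε => (∑ i, c i * ε i) ^ (2 * m)) ≤ (2 * p * T) ^ m :=
    calc _ ≤ gaussianMoment m * (2 * T) ^ m := ES_sum_mul_pow_le c m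
      _ ≤ p ^ m * (2 * T) ^ m := by
          gcongr
          exact (gaussianMoment_le_pow m).trans (by gcongr)
      _ = (2 * p * T) ^ m := by rw [← mul_pow]; ring_nf
  calc ES (2 * n) (fun ε => |∑ i, c i * ε i| ^ p) ^ (1 / p)
      ≤ ES (2 * n) (fun ε => |∑ i, c i * ε i| ^ ((2 * m : ℕ) : ℝ)) ^ (1 / ((2 * m : ℕ) : ℝ)) :=
        ES_abs_rpow_root_le_of_exponent_le _ (by linarith) (by push_cast; exact hpm)
    _ = ES (2 * n) (fun ε => (∑ i, c i * ε i) ^ (2 * m)) ^ (1 / (2 * m : ℝ)) := by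
        simp_rw [Real.rpow_natCast, (even_two_mul m).pow_abs]; push_cast; rfl
    _ ≤ ((2 * p * T) ^ m) ^ (1 / (2 * m : ℝ)) := by gcongr
    _ = √(2 * p) * √T := by
        rw [← Real.sqrt_mul (by positivity), Real.sqrt_eq_rpow, ← Real.rpow_natCast,
          ← Real.rpow_mul (by positivity)]
        congr 1
        field_simp

lemma sum_mul_eq_sum_sub_mul_of_mem_Omega {N : ℕ} {ε : Fin N → ℤ} (hε : ε ∈ Omega N)
    (a : Fin N → ℝ) (b : ℝ) : ∑ i, a i * ε i = ∑ i, (a i - b) * ε i := by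
  have h : ∑ i, (ε i : ℝ) = 0 := by exact_mod_cast (mem_filter.mp hε).2
  simp [sub_mul, sum_sub_distrib, ← mul_sum, h]

lemma sum_sub_mean_sq {N : ℕ} (a : Fin N → ℝ) :
    ∑ i, (a i - (∑ j, a j) / N) ^ 2 = ∑ i, a i ^ 2 - N * ((∑ j, a j) / N) ^ 2 := by
  rcases N.eq_zero_or_pos with rfl | hN
  · simp
  have hsum : ∑ j, a j = N * ((∑ j, a j) / N) := by field_simp
  simp only [sub_sq, sum_add_distrib, sum_sub_distrib, ← sum_mul, ← mul_sum, sum_const, card_univ,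
    Fintype.card_fin, nsmul_eq_mul]
  nth_rw 2 [hsum]
  ring

theorem stmt0_general (n : ℕ) (a : Fin (2 * n) → ℝ) (p : ℝ) (hp : 2 ≤ p) :
    (ES (2 * n) fun ε => |∑ i, a i * (ε i : ℝ)| ^ p) ^ (1 / p) ≤
      Real.sqrt (2 * p) *
        Real.sqrt (∑ i, (a i) ^ 2 - (2 * n : ℝ) * ((∑ i, a i) / (2 * n : ℝ)) ^ 2) := by
  set b := (∑ i, a i) / (2 * n : ℝ)
  have hvar := sum_sub_mean_sq a
  push_cast at hvar
  rw [← hvar, ES_congr (g' := fun ε => |∑ i, (a i - b) * (ε i : ℝ)| ^ p) fun ε hε => by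
    rw [sum_mul_eq_sum_sub_mul_of_mem_Omega hε a b]]
  exact ES_abs_sum_mul_rpow_le _ hp

theorem stmt0 (n : ℕ) (hn : 0 < n) (a : Fin (2 * n) → ℝ) (p : ℝ) (hp : 2 ≤ p) :
    (ES (2 * n) fun ε => |∑ i, a i * (ε i : ℝ)| ^ p) ^ (1 / p) ≤
      Real.sqrt (2 * p) *
        Real.sqrt (∑ i, (a i) ^ 2 - (2 * n : ℝ) * ((∑ i, a i) / (2 * n : ℝ)) ^ 2) :=
  stmt0_general n a p hp
end

section
/- Let n be a positive integer, N = 2n, and let Π_N be the group of permutations of {1, ..., N} equipped with the uniform probability measure; expectation is denoted E_Π. For a ∈ ℝ^N define f_a(σ) = |Σ_{i=1}^n a_{σ(i)} − Σ_{i=n+1}^{2n} a_{σ(i)}|. Then for every real p ≥ 2 and b = (1/N) Σ_{i=1}^N a_i, one has (E_Π |f_a|^p)^{1/p} ≤ √(2p) · (Σ_{i=1}^N a_i² − N b²)^{1/2} ≤ √(2p) · (E_Π |f_a|²)^{1/2}. -/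
/-- Expectation with respect to the uniform probability measure on the permutation
group `Π_N` of `{1, ..., N}`. -/
noncomputable def EPi (N : ℕ) (g : Equiv.Perm (Fin N) → ℝ) : ℝ :=
  (∑ σ : Equiv.Perm (Fin N), g σ) / (Fintype.card (Equiv.Perm (Fin N)) : ℝ)

/-- `f_a(σ) = |∑_{i=1}^n a_{σ(i)} - ∑_{i=n+1}^{2n} a_{σ(i)}|`. -/
noncomputable def fA (n : ℕ) (a : Fin (2 * n) → ℝ) (σ : Equiv.Perm (Fin (2 * n))) : ℝ :=
  |∑ i : Fin (2 * n), (if (i : ℕ) < n then a (σ i) else -a (σ i))|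

/-!
Index the `2n` positions as pairs `(inl j, inr j)`, so that `f_a(σ) = |∑ⱼ dⱼ(σ)|` with
`dⱼ(σ) = a_{σ(inl j)} - a_{σ(inr j)}`; subtracting the mean `b` from `a` changes nothing.
Composing `σ` with the transpositions of a random set of pairs preserves the uniform measure and
flips the signs of the `dⱼ` independently, so conditionally on `σ` the sum is a Rademacher sum.
Hence `E exp(t ∑ⱼ dⱼ) = E ∏ⱼ cosh(t dⱼ) ≤ exp(t² ∑ᵢ (aᵢ - b)²)`, since `∑ⱼ dⱼ² ≤ 2 ∑ᵢ (aᵢ - b)²`,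
and `|x|^p ≤ (p / (e s))^p (e^{sx} + e^{-sx})` at the optimal `s` gives the upper bound.
For the lower bound the same symmetrization gives `E (∑ⱼ dⱼ)² = E ∑ⱼ dⱼ²`, which is at least
`∑ᵢ (aᵢ - b)²` because centred values at two distinct positions are negatively correlated.
-/

open Finset Real Equiv

section Rademacher

variable {ι : Type*} [Fintype ι] [DecidableEq ι]

def boolSign (b : Bool) : ℝ := if b then -1 else 1

@[simp]
lemma boolSign_not (b : Bool) : boolSign (!b) = -boolSign b := by
  cases b <;> simp [boolSign]

@[simp]
lemma boolSign_mul_self (b : Bool) : boolSign b * boolSign b = 1 := by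
  cases b <;> simp [boolSign]

lemma sum_exp_boolSign_mul (x : ℝ) : ∑ b : Bool, exp (boolSign b * x) = 2 * cosh x := by
  rw [Fintype.sum_bool, cosh_eq]
  simp only [boolSign, ↓reduceIte, Bool.false_eq_true, neg_mul, one_mul]
  ring

lemma sum_exp_sum_boolSign_mul (x : ι → ℝ) :
    ∑ ε : ι → Bool, exp (∑ i, boolSign (ε i) * x i) = ∏ i, 2 * cosh (x i) := by
  simp_rw [exp_sum, ← sum_exp_boolSign_mul]
  exact (Fintype.prod_sum fun i b => exp (boolSign b * x i)).symm

lemma sum_exp_sum_boolSign_mul_le (x : ι → ℝ) :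
    ∑ ε : ι → Bool, exp (∑ i, boolSign (ε i) * x i) ≤
      2 ^ Fintype.card ι * exp ((∑ i, x i ^ 2) / 2) := by
  rw [sum_exp_sum_boolSign_mul, prod_mul_distrib, prod_const, card_univ, sum_div, exp_sum]
  gcongr with i
  exact cosh_le_exp_half_sq _

lemma sum_boolSign_mul_boolSign (i j : ι) :
    ∑ ε : ι → Bool, boolSign (ε i) * boolSign (ε j) = if i = j then 2 ^ Fintype.card ι else 0 := by
  split_ifs with hij
  · subst hij
    simp
  · -- flipping the `i`-th sign is an involution that negates every summand
    have hflip : Function.Involutive fun ε : ι → Bool => Function.update ε i (!ε i) := by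
      intro ε
      simp
    have hneg := Equiv.sum_comp hflip.toPerm fun ε : ι → Bool => boolSign (ε i) * boolSign (ε j)
    simp only [Function.Involutive.coe_toPerm, Function.update_self,
      Function.update_of_ne (Ne.symm hij), boolSign_not, neg_mul, sum_neg_distrib] at hneg
    linarith

lemma sum_sq_sum_boolSign_mul (x : ι → ℝ) :
    ∑ ε : ι → Bool, (∑ i, boolSign (ε i) * x i) ^ 2 = 2 ^ Fintype.card ι * ∑ i, x i ^ 2 := by
  calc ∑ ε : ι → Bool, (∑ i, boolSign (ε i) * x i) ^ 2
      = ∑ i, ∑ j, x i * x j * ∑ ε : ι → Bool, boolSign (ε i) * boolSign (ε j) := by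
        simp_rw [sq, sum_mul_sum, mul_sum]
        rw [sum_comm]
        refine sum_congr rfl fun i _ => ?_
        rw [sum_comm]
        exact sum_congr rfl fun j _ => sum_congr rfl fun ε _ => by ring
    _ = 2 ^ Fintype.card ι * ∑ i, x i ^ 2 := by
        simp_rw [sum_boolSign_mul_boolSign, mul_ite, mul_zero, sum_ite_eq, mem_univ, if_true,
          mul_sum]
        exact sum_congr rfl fun i _ => by ring

end Rademacher

lemma sum_perm_mul_apply_nonpos {α : Type*} [Fintype α] [DecidableEq α] (c : α → ℝ)
    (hc : ∑ x, c x = 0) {u v : α} (huv : u ≠ v) :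
    ∑ σ : Perm α, c (σ u) * c (σ v) ≤ 0 := by
  set T := ∑ σ : Perm α, c (σ u) * c (σ v)
  -- relabelling by the transposition of `w` and `v` shows that all off-diagonal terms agree
  have hT : ∀ w ∈ univ.erase u, ∑ σ : Perm α, c (σ u) * c (σ w) = T := by
    intro w hw
    refine (Equiv.sum_comp (Equiv.mulRight (swap w v)) _).symm.trans (sum_congr rfl fun σ _ => ?_)
    simp [swap_apply_of_ne_of_ne (ne_of_mem_erase hw).symm huv]
  have hrow : ∑ w, ∑ σ : Perm α, c (σ u) * c (σ w) = 0 := by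
    rw [sum_comm]
    exact sum_eq_zero fun σ _ => by rw [← mul_sum, Equiv.sum_comp σ c, hc, mul_zero]
  rw [← add_sum_erase _ _ (mem_univ u), sum_congr rfl hT, sum_const, nsmul_eq_mul] at hrow
  have hdiag : 0 ≤ ∑ σ : Perm α, c (σ u) * c (σ u) := sum_nonneg fun _ _ => mul_self_nonneg _
  have hcard : (0 : ℝ) < #(univ.erase u) := by
    exact_mod_cast card_pos.2 ⟨v, mem_erase.2 ⟨huv.symm, mem_univ v⟩⟩
  nlinarith

lemma rpow_le_div_rpow_mul_exp {p s y : ℝ} (hp : 0 < p) (hs : 0 < s) (hy : 0 ≤ y) :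
    y ^ p ≤ (p / s) ^ p * exp (s * y - p) := by
  have hu : s * y / p ≤ exp (s * y / p - 1) := by linarith [add_one_le_exp (s * y / p - 1)]
  calc y ^ p = (p / s * (s * y / p)) ^ p := by congr 1; field_simp
    _ = (p / s) ^ p * (s * y / p) ^ p := mul_rpow (by positivity) (by positivity)
    _ ≤ (p / s) ^ p * exp (s * y / p - 1) ^ p := by gcongr
    _ = (p / s) ^ p * exp (s * y - p) := by rw [← exp_mul]; congr 2; field_simp

lemma sum_abs_rpow_le_of_sum_exp_le {Ω : Type*} [Fintype Ω] (X : Ω → ℝ) {M V p : ℝ}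
    (hV : 0 < V) (hp : 2 ≤ p) (hmgf : ∀ t, ∑ ω, exp (t * X ω) ≤ M * exp (t ^ 2 * V)) :
    ∑ ω, |X ω| ^ p ≤ M * sqrt (2 * p * V) ^ p := by
  have hp0 : 0 < p := by linarith
  have hM : 0 ≤ M := by simpa using (sum_nonneg fun ω _ => (exp_pos (0 * X ω)).le).trans (hmgf 0)
  -- the optimal exponent in the Chernoff-type bound
  set s := sqrt (p / (2 * V))
  have hs : 0 < s := sqrt_pos.2 (by positivity)
  have hsV : s ^ 2 * V = p / 2 := by rw [sq_sqrt (by positivity)]; field_simp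
  have hps : p / s = sqrt (2 * p * V) := by
    rw [div_eq_iff hs.ne', ← sqrt_mul (by positivity),
      show 2 * p * V * (p / (2 * V)) = p ^ 2 by field_simp, sqrt_sq hp0.le]
  have hhalf : exp (-p) * exp (p / 2) = exp (-(p / 2)) := by rw [← exp_add]; ring_nf
  have htwo : 2 * exp (-(p / 2)) ≤ 1 := by
    rw [exp_neg, ← div_eq_mul_inv, div_le_one (exp_pos _)]
    linarith [add_one_le_exp (p / 2)]
  calc ∑ ω, |X ω| ^ p
      ≤ ∑ ω, (p / s) ^ p * exp (-p) * (exp (s * X ω) + exp (-s * X ω)) := by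
        gcongr with ω
        refine (rpow_le_div_rpow_mul_exp hp0 hs (abs_nonneg _)).trans ?_
        rw [sub_eq_add_neg, exp_add, mul_assoc, mul_comm (exp (s * |X ω|)), neg_mul]
        gcongr
        simpa [abs_mul, abs_of_pos hs] using exp_abs_le (s * X ω)
    _ = (p / s) ^ p * exp (-p) * (∑ ω, exp (s * X ω) + ∑ ω, exp (-s * X ω)) := by
        rw [← mul_sum, sum_add_distrib]
    _ ≤ (p / s) ^ p * exp (-p) * (M * exp (s ^ 2 * V) + M * exp ((-s) ^ 2 * V)) := by
        gcongr <;> exact hmgf _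
    _ = M * sqrt (2 * p * V) ^ p * (2 * exp (-(p / 2))) := by
        rw [neg_sq, hsV, hps, ← hhalf]
        ring
    _ ≤ M * sqrt (2 * p * V) ^ p := mul_le_of_le_one_right (by positivity) htwo

lemma sum_sub_mean {α : Type*} [Fintype α] (a : α → ℝ) :
    ∑ x, (a x - (∑ y, a y) / Fintype.card α) = 0 := by
  rcases isEmpty_or_nonempty α with hα | hα
  · simp
  · rw [sum_sub_distrib, sum_const, card_univ, nsmul_eq_mul, mul_div_cancel₀ _ (by positivity),
      sub_self]

lemma sum_sub_mean_sq_s3 {α : Type*} [Fintype α] (a : α → ℝ) :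
    ∑ x, (a x - (∑ y, a y) / Fintype.card α) ^ 2 =
      ∑ x, a x ^ 2 - Fintype.card α * ((∑ y, a y) / Fintype.card α) ^ 2 := by
  set m := (∑ y, a y) / Fintype.card α
  have hsum : ∑ x, a x = Fintype.card α * m := by
    have := sum_sub_mean a
    rw [sum_sub_distrib, sum_const, card_univ, nsmul_eq_mul] at this
    linarith
  simp_rw [sub_sq, sum_add_distrib, sum_sub_distrib, ← sum_mul, ← mul_sum, hsum, sum_const,
    card_univ, nsmul_eq_mul]
  ring

section PairSum

variable {ι : Type*}

def pairDiff (c : ι ⊕ ι → ℝ) (σ : Perm (ι ⊕ ι)) (j : ι) : ℝ :=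
  c (σ (.inl j)) - c (σ (.inr j))

def pairSwap (ε : ι → Bool) : Perm (ι ⊕ ι) :=
  Function.Involutive.toPerm
    (Sum.elim (fun j => if ε j then .inr j else .inl j) (fun j => if ε j then .inl j else .inr j))
    (by rintro (j | j) <;> by_cases h : ε j <;> simp [h])

@[simp]
lemma pairSwap_inl (ε : ι → Bool) (j : ι) :
    pairSwap ε (.inl j) = if ε j then .inr j else .inl j := rfl

@[simp]
lemma pairSwap_inr (ε : ι → Bool) (j : ι) :
    pairSwap ε (.inr j) = if ε j then .inl j else .inr j := rfl

lemma pairDiff_mul_pairSwap (c : ι ⊕ ι → ℝ) (σ : Perm (ι ⊕ ι)) (ε : ι → Bool) (j : ι) :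
    pairDiff c (σ * pairSwap ε) j = boolSign (ε j) * pairDiff c σ j := by
  by_cases h : ε j <;> simp [pairDiff, boolSign, h]

variable [Fintype ι]

def pairSum (c : ι ⊕ ι → ℝ) (σ : Perm (ι ⊕ ι)) : ℝ :=
  ∑ j, pairDiff c σ j

lemma pairSum_sub_const (c : ι ⊕ ι → ℝ) (b : ℝ) (σ : Perm (ι ⊕ ι)) :
    pairSum (fun x => c x - b) σ = pairSum c σ :=
  sum_congr rfl fun j _ => by simp only [pairDiff]; ring

lemma sum_sq_inl_add_sq_inr (c : ι ⊕ ι → ℝ) (σ : Perm (ι ⊕ ι)) :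
    ∑ j, (c (σ (.inl j)) ^ 2 + c (σ (.inr j)) ^ 2) = ∑ x, c x ^ 2 := by
  rw [sum_add_distrib, ← Fintype.sum_sum_type fun x => c (σ x) ^ 2,
    Equiv.sum_comp σ fun x => c x ^ 2]

lemma sum_pairDiff_sq_le (c : ι ⊕ ι → ℝ) (σ : Perm (ι ⊕ ι)) :
    ∑ j, pairDiff c σ j ^ 2 ≤ 2 * ∑ x, c x ^ 2 := by
  rw [← sum_sq_inl_add_sq_inr c σ, mul_sum]
  gcongr with j
  rw [pairDiff]
  nlinarith [sq_nonneg (c (σ (.inl j)) + c (σ (.inr j)))]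

variable [DecidableEq ι]

lemma two_pow_mul_sum_perm_pairSum (g : ℝ → ℝ) (c : ι ⊕ ι → ℝ) :
    2 ^ Fintype.card ι * ∑ σ : Perm (ι ⊕ ι), g (pairSum c σ) =
      ∑ σ : Perm (ι ⊕ ι), ∑ ε : ι → Bool, g (∑ j, boolSign (ε j) * pairDiff c σ j) := by
  have hinv (ε : ι → Bool) :
      ∑ σ : Perm (ι ⊕ ι), g (pairSum c (σ * pairSwap ε)) = ∑ σ : Perm (ι ⊕ ι), g (pairSum c σ) :=
    Equiv.sum_comp (Equiv.mulRight (pairSwap ε)) fun σ => g (pairSum c σ)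
  calc 2 ^ Fintype.card ι * ∑ σ : Perm (ι ⊕ ι), g (pairSum c σ)
      = ∑ ε : ι → Bool, ∑ σ : Perm (ι ⊕ ι), g (pairSum c (σ * pairSwap ε)) := by
        simp only [hinv, sum_const, card_univ, Fintype.card_fun, Fintype.card_bool,
          nsmul_eq_mul, Nat.cast_pow, Nat.cast_ofNat]
    _ = _ := by
        rw [sum_comm]
        simp_rw [pairSum, pairDiff_mul_pairSwap]

lemma sum_exp_mul_pairSum_le (c : ι ⊕ ι → ℝ) (t : ℝ) :
    ∑ σ : Perm (ι ⊕ ι), exp (t * pairSum c σ) ≤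
      Fintype.card (Perm (ι ⊕ ι)) * exp (t ^ 2 * ∑ x, c x ^ 2) := by
  refine le_of_mul_le_mul_left ?_ (by positivity : (0 : ℝ) < 2 ^ Fintype.card ι)
  rw [two_pow_mul_sum_perm_pairSum fun y => exp (t * y)]
  calc ∑ σ : Perm (ι ⊕ ι), ∑ ε : ι → Bool, exp (t * ∑ j, boolSign (ε j) * pairDiff c σ j)
      ≤ ∑ σ : Perm (ι ⊕ ι), 2 ^ Fintype.card ι * exp ((∑ j, (t * pairDiff c σ j) ^ 2) / 2) := by
        gcongr with σ
        simp_rw [mul_sum, mul_left_comm t]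
        exact sum_exp_sum_boolSign_mul_le _
    _ ≤ ∑ σ : Perm (ι ⊕ ι), 2 ^ Fintype.card ι * exp (t ^ 2 * ∑ x, c x ^ 2) := by
        gcongr with σ
        simp_rw [mul_pow, ← mul_sum]
        nlinarith [sum_pairDiff_sq_le c σ, sq_nonneg t]
    _ = _ := by rw [sum_const, card_univ, nsmul_eq_mul]; ring

lemma sum_pairSum_sq (c : ι ⊕ ι → ℝ) :
    ∑ σ : Perm (ι ⊕ ι), pairSum c σ ^ 2 = ∑ σ : Perm (ι ⊕ ι), ∑ j, pairDiff c σ j ^ 2 := by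
  refine mul_left_cancel₀ (by positivity : (2 : ℝ) ^ Fintype.card ι ≠ 0) ?_
  rw [two_pow_mul_sum_perm_pairSum fun y => y ^ 2, mul_sum]
  simp only [sum_sq_sum_boolSign_mul]

lemma card_mul_sum_sq_le_sum_pairSum_sq (c : ι ⊕ ι → ℝ) (hc : ∑ x, c x = 0) :
    Fintype.card (Perm (ι ⊕ ι)) * ∑ x, c x ^ 2 ≤ ∑ σ : Perm (ι ⊕ ι), pairSum c σ ^ 2 := by
  have hdiff (σ : Perm (ι ⊕ ι)) : ∑ j, pairDiff c σ j ^ 2 =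
      ∑ x, c x ^ 2 - 2 * ∑ j, c (σ (.inl j)) * c (σ (.inr j)) := by
    rw [← sum_sq_inl_add_sq_inr c σ, mul_sum, ← sum_sub_distrib]
    exact sum_congr rfl fun j _ => by rw [pairDiff]; ring
  have hcross : ∑ σ : Perm (ι ⊕ ι), ∑ j, c (σ (.inl j)) * c (σ (.inr j)) ≤ 0 := by
    rw [sum_comm]
    exact sum_nonpos fun j _ => sum_perm_mul_apply_nonpos c hc Sum.inl_ne_inr
  rw [sum_pairSum_sq]
  simp_rw [hdiff, sum_sub_distrib, sum_const, card_univ, nsmul_eq_mul, ← mul_sum]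
  linarith

lemma sum_abs_pairSum_rpow_le (c : ι ⊕ ι → ℝ) {p : ℝ} (hp : 2 ≤ p) :
    ∑ σ : Perm (ι ⊕ ι), |pairSum c σ| ^ p ≤
      Fintype.card (Perm (ι ⊕ ι)) * sqrt (2 * p * ∑ x, c x ^ 2) ^ p := by
  rcases (sum_nonneg fun x _ => sq_nonneg (c x)).eq_or_lt with hV | hV
  · have hc : c = 0 := by
      ext x
      exact pow_eq_zero_iff two_ne_zero |>.1 <|
        congrFun ((Fintype.sum_eq_zero_iff_of_nonneg fun x => sq_nonneg (c x)).1 hV.symm) x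
    simp [hc, pairSum, pairDiff, zero_rpow (by linarith : p ≠ 0)]
  · exact sum_abs_rpow_le_of_sum_exp_le _ hV hp (sum_exp_mul_pairSum_le c)

end PairSum

def finSumFinEquivTwoMul (n : ℕ) : Fin n ⊕ Fin n ≃ Fin (2 * n) :=
  finSumFinEquiv.trans (finCongr (two_mul n).symm)

lemma fA_eq_abs_pairSum (n : ℕ) (a : Fin (2 * n) → ℝ) (σ : Perm (Fin (2 * n))) :
    fA n a σ =
      |pairSum (a ∘ finSumFinEquivTwoMul n) ((finSumFinEquivTwoMul n).symm.permCongr σ)| := by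
  rw [fA, ← (finSumFinEquivTwoMul n).sum_comp, Fintype.sum_sum_type]
  simp [finSumFinEquivTwoMul, pairSum, pairDiff, sub_eq_add_neg, sum_add_distrib]

lemma EPi_comp_fA (n : ℕ) (a : Fin (2 * n) → ℝ) (g : ℝ → ℝ) :
    EPi (2 * n) (fun σ => g (fA n a σ)) =
      (∑ σ : Perm (Fin n ⊕ Fin n), g |pairSum (a ∘ finSumFinEquivTwoMul n) σ|) /
        Fintype.card (Perm (Fin n ⊕ Fin n)) := by
  rw [EPi, Fintype.card_congr (finSumFinEquivTwoMul n).symm.permCongr]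
  simp_rw [fA_eq_abs_pairSum]
  rw [Equiv.sum_comp (finSumFinEquivTwoMul n).symm.permCongr
    fun σ => g |pairSum (a ∘ finSumFinEquivTwoMul n) σ|]

theorem stmt3_general (n : ℕ) (a : Fin (2 * n) → ℝ) (p : ℝ) (hp : 2 ≤ p) :
    (EPi (2 * n) fun σ => fA n a σ ^ p) ^ (1 / p) ≤
        Real.sqrt (2 * p) *
          Real.sqrt (∑ i, (a i) ^ 2 - (2 * n : ℝ) * ((∑ i, a i) / (2 * n : ℝ)) ^ 2) ∧
      Real.sqrt (2 * p) *
          Real.sqrt (∑ i, (a i) ^ 2 - (2 * n : ℝ) * ((∑ i, a i) / (2 * n : ℝ)) ^ 2) ≤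
        Real.sqrt (2 * p) * Real.sqrt (EPi (2 * n) fun σ => fA n a σ ^ 2) := by
  have hcard : (Fintype.card (Fin (2 * n)) : ℝ) = 2 * n := by simp
  set c : Fin n ⊕ Fin n → ℝ := fun x => a (finSumFinEquivTwoMul n x) - (∑ i, a i) / (2 * n : ℝ)
  have hc : ∑ x, c x = 0 := by
    rw [(finSumFinEquivTwoMul n).sum_comp fun i => a i - (∑ i, a i) / (2 * n : ℝ)]
    simpa [hcard] using sum_sub_mean a
  have hV : ∑ x, c x ^ 2 = ∑ i, a i ^ 2 - (2 * n : ℝ) * ((∑ i, a i) / (2 * n : ℝ)) ^ 2 := by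
    rw [(finSumFinEquivTwoMul n).sum_comp fun i => (a i - (∑ i, a i) / (2 * n : ℝ)) ^ 2]
    simpa [hcard] using sum_sub_mean_sq_s3 a
  have hE (g : ℝ → ℝ) : EPi (2 * n) (fun σ => g (fA n a σ)) =
      (∑ σ, g |pairSum c σ|) / Fintype.card (Perm (Fin n ⊕ Fin n)) := by
    simp only [EPi_comp_fA, c, pairSum_sub_const]
    rfl
  have hM : (0 : ℝ) < Fintype.card (Perm (Fin n ⊕ Fin n)) := by exact_mod_cast Fintype.card_pos
  rw [← hV]
  refine ⟨?_, ?_⟩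
  · rw [← sqrt_mul (by linarith)]
    calc (EPi (2 * n) fun σ => fA n a σ ^ p) ^ (1 / p)
        ≤ (sqrt (2 * p * ∑ x, c x ^ 2) ^ p) ^ (1 / p) := by
          rw [hE fun x => x ^ p]
          gcongr
          rw [div_le_iff₀ hM, mul_comm]
          exact sum_abs_pairSum_rpow_le c hp
      _ = sqrt (2 * p * ∑ x, c x ^ 2) := by
          rw [← rpow_mul (sqrt_nonneg _), mul_one_div_cancel (by linarith), rpow_one]
  · gcongr
    rw [hE fun x => x ^ 2, le_div_iff₀ hM, mul_comm]
    simpa only [sq_abs] using card_mul_sum_sq_le_sum_pairSum_sq c hc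

theorem stmt3 (n : ℕ) (hn : 0 < n) (a : Fin (2 * n) → ℝ) (p : ℝ) (hp : 2 ≤ p) :
    (EPi (2 * n) fun σ => fA n a σ ^ p) ^ (1 / p) ≤
        Real.sqrt (2 * p) *
          Real.sqrt (∑ i, (a i) ^ 2 - (2 * n : ℝ) * ((∑ i, a i) / (2 * n : ℝ)) ^ 2) ∧
      Real.sqrt (2 * p) *
          Real.sqrt (∑ i, (a i) ^ 2 - (2 * n : ℝ) * ((∑ i, a i) / (2 * n : ℝ)) ^ 2) ≤
        Real.sqrt (2 * p) * Real.sqrt (EPi (2 * n) fun σ => fA n a σ ^ 2) :=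
  stmt3_general n a p hp
end

section
/- Let n be a positive integer and 1 ≤ ℓ ≤ n. Let ξ be a hypergeometric random variable with parameters (2n, n, ℓ), i.e. ξ takes the value k ∈ {0, ..., ℓ} with probability C(ℓ,k)·C(2n−ℓ, n−k) / C(2n, n). Then for every real p ≥ 2, E |ξ − E ξ|^p ≤ √2 · (p ℓ / 4)^{p/2}. -/
/-- The probability that a hypergeometric random variable with parameters
`(N, n, ℓ)` takes the value `k`: `C(ℓ,k) C(N-ℓ, n-k) / C(N, n)`. -/
noncomputable def hgP (N n ℓ k : ℕ) : ℝ :=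
  ((ℓ.choose k : ℝ) * ((N - ℓ).choose (n - k) : ℝ)) / ((N.choose n : ℝ))

/-- The mean of a hypergeometric random variable with parameters `(N, n, ℓ)`. -/
noncomputable def hgMean (N n ℓ : ℕ) : ℝ :=
  ∑ k ∈ Finset.range (ℓ + 1), (k : ℝ) * hgP N n ℓ k

/-- The `p`-th absolute central moment `E |ξ - E ξ|^p` of a hypergeometric random
variable `ξ` with parameters `(N, n, ℓ)`. -/
noncomputable def hgCentralMoment (N n ℓ : ℕ) (p : ℝ) : ℝ :=
  ∑ k ∈ Finset.range (ℓ + 1), |(k : ℝ) - hgMean N n ℓ| ^ p * hgP N n ℓ k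

/-!
By the symmetry `k ↦ ℓ - k` of the weights the mean is `ℓ / 2`. Bounding `C(2n-ℓ, n-k)` by the
middle binomial coefficient, and using that `s * C(2s, s)^2 / 16^s` increases with `s`, shows that
each hypergeometric weight is at most `√2` times the binomial weight `C(ℓ, k) / 2^ℓ`. The central
moments of the symmetric binomial law are then bounded by a Chernoff argument: `y^p ≤ (p/e)^p e^y`
turns `|x|^p` into a multiple of `cosh (2 t x)`, whose binomial average is
`cosh t ^ ℓ ≤ exp (ℓ t^2 / 2)`, and `t = p / (2 √(p ℓ / 4))` leaves the factor `2 e^(-p/2) ≤ 1`.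
-/

open Finset Real

namespace Nat

theorem sixteen_mul_centralBinom_sq_mul_le (s : ℕ) :
    16 * centralBinom s ^ 2 * s ≤ centralBinom (s + 1) ^ 2 * (s + 1) := by
  have h := succ_mul_centralBinom_succ s
  have : 16 * s * (s + 1) ≤ 4 * (2 * s + 1) ^ 2 := by nlinarith
  refine Nat.le_of_mul_le_mul_right ?_ s.succ_pos
  calc 16 * centralBinom s ^ 2 * s * (s + 1) = 16 * s * (s + 1) * centralBinom s ^ 2 := by ring
    _ ≤ 4 * (2 * s + 1) ^ 2 * centralBinom s ^ 2 := by gcongr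
    _ = ((s + 1) * centralBinom (s + 1)) ^ 2 := by rw [h]; ring
    _ = centralBinom (s + 1) ^ 2 * (s + 1) * (s + 1) := by ring

theorem sixteen_pow_mul_centralBinom_sq_mul_le (c j : ℕ) :
    16 ^ j * centralBinom c ^ 2 * c ≤ centralBinom (c + j) ^ 2 * (c + j) := by
  induction j with
  | zero => simp
  | succ j ih =>
    calc 16 ^ (j + 1) * centralBinom c ^ 2 * c = 16 * (16 ^ j * centralBinom c ^ 2 * c) := by
          ring
      _ ≤ 16 * centralBinom (c + j) ^ 2 * (c + j) := by rw [mul_assoc 16]; gcongr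
      _ ≤ centralBinom (c + (j + 1)) ^ 2 * (c + (j + 1)) :=
        sixteen_mul_centralBinom_sq_mul_le (c + j)

theorem sixteen_pow_mul_centralBinom_sq_le {c j : ℕ} (h : j ≤ c) :
    16 ^ j * centralBinom c ^ 2 ≤ 2 * centralBinom (c + j) ^ 2 := by
  rcases Nat.eq_zero_or_pos (c + j) with h0 | hpos
  · obtain ⟨rfl, rfl⟩ : c = 0 ∧ j = 0 := by omega
    simp
  refine Nat.le_of_mul_le_mul_right ?_ hpos
  calc 16 ^ j * centralBinom c ^ 2 * (c + j) ≤ 2 * (16 ^ j * centralBinom c ^ 2 * c) := by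
        nlinarith [Nat.zero_le (16 ^ j * centralBinom c ^ 2)]
    _ ≤ 2 * (centralBinom (c + j) ^ 2 * (c + j)) :=
        Nat.mul_le_mul_left 2 (sixteen_pow_mul_centralBinom_sq_mul_le c j)
    _ = 2 * centralBinom (c + j) ^ 2 * (c + j) := by ring

theorem two_mul_choose_two_mul_add_one (s : ℕ) :
    2 * (2 * s + 1).choose s = centralBinom (s + 1) := by
  rw [centralBinom_eq_two_mul_choose, show 2 * (s + 1) = 2 * s + 1 + 1 by ring,
    choose_succ_succ', choose_symm_half]
  ring

theorem four_pow_mul_choose_half_sq_le {n ℓ : ℕ} (h : ℓ ≤ n) :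
    4 ^ ℓ * (2 * n - ℓ).choose ((2 * n - ℓ) / 2) ^ 2 ≤ 2 * centralBinom n ^ 2 := by
  obtain ⟨j, rfl | rfl⟩ := Nat.even_or_odd' ℓ
  · obtain ⟨c, rfl⟩ : ∃ c, n = c + 2 * j := ⟨n - 2 * j, by omega⟩
    rw [show 2 * (c + 2 * j) - 2 * j = 2 * (c + j) by omega, Nat.mul_div_cancel_left _ two_pos,
      ← centralBinom_eq_two_mul_choose, pow_mul, show c + 2 * j = c + j + j by ring]
    exact sixteen_pow_mul_centralBinom_sq_le (by omega)
  · obtain ⟨c, rfl⟩ : ∃ c, n = c + 2 * j + 1 := ⟨n - (2 * j + 1), by omega⟩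
    rw [show 2 * (c + 2 * j + 1) - (2 * j + 1) = 2 * (c + j) + 1 by omega,
      show (2 * (c + j) + 1) / 2 = c + j by omega, pow_succ, pow_mul,
      show c + 2 * j + 1 = c + j + 1 + j by ring]
    calc 16 ^ j * 4 * (2 * (c + j) + 1).choose (c + j) ^ 2
        = 16 ^ j * centralBinom (c + j + 1) ^ 2 := by
          rw [← two_mul_choose_two_mul_add_one]; ring
      _ ≤ 2 * centralBinom (c + j + 1 + j) ^ 2 := sixteen_pow_mul_centralBinom_sq_le (by omega)

end Nat

theorem Real.rpow_le_div_exp_one_rpow_mul_exp {p y : ℝ} (hp : 0 < p) (hy : 0 ≤ y) :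
    y ^ p ≤ (p / exp 1) ^ p * exp y := by
  have hyp : 0 ≤ y / p := div_nonneg hy hp.le
  have key : (y / p) ^ p ≤ exp (y - p) := by
    calc (y / p) ^ p ≤ exp (y / p - 1) ^ p := by
          gcongr; linarith [add_one_le_exp (y / p - 1)]
      _ = exp (y - p) := by rw [← exp_mul]; congr 1; field_simp
  calc y ^ p = p ^ p * (y / p) ^ p := by rw [← mul_rpow hp.le hyp, mul_div_cancel₀ _ hp.ne']
    _ ≤ p ^ p * exp (y - p) := by gcongr
    _ = (p / exp 1) ^ p * exp y := by
      rw [div_rpow hp.le (exp_pos 1).le, exp_one_rpow, exp_sub]; field_simp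

theorem Real.exp_abs_le_two_mul_cosh (x : ℝ) : exp |x| ≤ 2 * cosh x := by
  rw [cosh_eq]
  rcases abs_cases x with ⟨h, _⟩ | ⟨h, _⟩ <;> rw [h] <;> linarith [exp_pos x, exp_pos (-x)]

theorem Real.abs_rpow_le_mul_cosh {p s : ℝ} (hp : 0 < p) (hs : 0 < s) (x : ℝ) :
    |x| ^ p ≤ 2 * (p / (s * exp 1)) ^ p * cosh (s * x) := by
  have hsp : 0 < s ^ p := rpow_pos_of_pos hs p
  calc |x| ^ p = |s * x| ^ p / s ^ p := by
        rw [abs_mul, abs_of_pos hs, mul_rpow hs.le (abs_nonneg x)]; field_simp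
    _ ≤ (p / exp 1) ^ p * (2 * cosh (s * x)) / s ^ p := by
        gcongr
        exact (rpow_le_div_exp_one_rpow_mul_exp hp (abs_nonneg _)).trans
          (by gcongr; exact exp_abs_le_two_mul_cosh _)
    _ = 2 * (p / (s * exp 1)) ^ p * cosh (s * x) := by
        rw [show p / (s * exp 1) = p / exp 1 / s by ring, div_rpow (by positivity) hs.le]
        ring

theorem sum_choose_div_two_pow_mul_exp (ℓ : ℕ) (t : ℝ) :
    ∑ k ∈ range (ℓ + 1), (ℓ.choose k / 2 ^ ℓ : ℝ) * exp (2 * t * (k - ℓ / 2)) = cosh t ^ ℓ := by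
  rw [cosh_eq, div_pow, add_pow, sum_div]
  refine sum_congr rfl fun k hk => ?_
  have hkℓ : k ≤ ℓ := Nat.lt_succ_iff.mp (mem_range.mp hk)
  rw [← exp_nat_mul, ← exp_nat_mul, ← exp_add, Nat.cast_sub hkℓ]
  ring_nf

theorem sum_choose_div_two_pow_mul_cosh (ℓ : ℕ) (t : ℝ) :
    ∑ k ∈ range (ℓ + 1), (ℓ.choose k / 2 ^ ℓ : ℝ) * cosh (2 * t * (k - ℓ / 2)) = cosh t ^ ℓ := by
  calc ∑ k ∈ range (ℓ + 1), (ℓ.choose k / 2 ^ ℓ : ℝ) * cosh (2 * t * (k - ℓ / 2))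
      = (∑ k ∈ range (ℓ + 1), (ℓ.choose k / 2 ^ ℓ : ℝ) * exp (2 * t * (k - ℓ / 2)) +
          ∑ k ∈ range (ℓ + 1), (ℓ.choose k / 2 ^ ℓ : ℝ) * exp (2 * -t * (k - ℓ / 2))) / 2 := by
        rw [← sum_add_distrib, sum_div]
        refine sum_congr rfl fun k _ => ?_
        rw [cosh_eq]; ring_nf
    _ = cosh t ^ ℓ := by
        rw [sum_choose_div_two_pow_mul_exp, sum_choose_div_two_pow_mul_exp, cosh_neg]; ring

theorem sum_abs_sub_half_rpow_mul_choose_le_mul_exp (ℓ : ℕ) {p t : ℝ} (hp : 0 < p) (ht : 0 < t) :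
    ∑ k ∈ range (ℓ + 1), |(k : ℝ) - ℓ / 2| ^ p * (ℓ.choose k / 2 ^ ℓ)
      ≤ 2 * (p / (2 * t * exp 1)) ^ p * exp (ℓ * t ^ 2 / 2) := by
  set c := 2 * (p / (2 * t * exp 1)) ^ p
  calc ∑ k ∈ range (ℓ + 1), |(k : ℝ) - ℓ / 2| ^ p * (ℓ.choose k / 2 ^ ℓ)
      ≤ ∑ k ∈ range (ℓ + 1), c * cosh (2 * t * (k - ℓ / 2)) * (ℓ.choose k / 2 ^ ℓ) := by
        gcongr with k
        exact abs_rpow_le_mul_cosh hp (by positivity) _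
    _ = c * cosh t ^ ℓ := by
        rw [← sum_choose_div_two_pow_mul_cosh, mul_sum]
        exact sum_congr rfl fun k _ => by ring
    _ ≤ c * exp (t ^ 2 / 2) ^ ℓ := by gcongr; exact cosh_le_exp_half_sq t
    _ = c * exp (ℓ * t ^ 2 / 2) := by rw [← exp_nat_mul, mul_div_assoc]

theorem sum_abs_sub_half_rpow_mul_choose_le {ℓ : ℕ} (hℓ : 0 < ℓ) {p : ℝ} (hp : 2 ≤ p) :
    ∑ k ∈ range (ℓ + 1), |(k : ℝ) - ℓ / 2| ^ p * (ℓ.choose k / 2 ^ ℓ) ≤ (p * ℓ / 4) ^ (p / 2) := by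
  have hp0 : 0 < p := by linarith
  have hA : 0 < p * ℓ / 4 := by positivity
  set σ := √(p * ℓ / 4)
  have hσ : 0 < σ := sqrt_pos.mpr hA
  have hσ2 : σ ^ 2 = p * ℓ / 4 := sq_sqrt hA.le
  have hσp : σ ^ p = (p * ℓ / 4) ^ (p / 2) := by
    rw [show σ = (p * ℓ / 4) ^ (1 / 2 : ℝ) from sqrt_eq_rpow _, ← rpow_mul hA.le]; ring_nf
  have h2exp : 2 * exp (p / 2) ≤ exp p := by
    have : 2 ≤ exp (p / 2) := by
      linarith [add_one_le_exp 1, exp_le_exp.mpr (show (1 : ℝ) ≤ p / 2 by linarith)]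
    calc 2 * exp (p / 2) ≤ exp (p / 2) * exp (p / 2) := by gcongr
      _ = exp p := by rw [← exp_add]; ring_nf
  have key := sum_abs_sub_half_rpow_mul_choose_le_mul_exp ℓ hp0 (t := p / (2 * σ)) (by positivity)
  have h1 : p / (2 * (p / (2 * σ)) * exp 1) = σ / exp 1 := by field_simp
  have h2 : (ℓ : ℝ) * (p / (2 * σ)) ^ 2 / 2 = p / 2 := by
    rw [div_pow, mul_pow, hσ2]; field_simp; ring
  rw [h1, h2, div_rpow hσ.le (exp_pos 1).le, exp_one_rpow, hσp] at key
  refine key.trans ?_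
  calc 2 * ((p * ℓ / 4) ^ (p / 2) / exp p) * exp (p / 2)
      = (p * ℓ / 4) ^ (p / 2) * (2 * exp (p / 2) / exp p) := by ring
    _ ≤ (p * ℓ / 4) ^ (p / 2) * 1 := by
        gcongr
        exact (div_le_one (exp_pos p)).mpr h2exp
    _ = (p * ℓ / 4) ^ (p / 2) := mul_one _

-- `ℓ ≤ n` is needed because `n - k` truncates: for `n < k ≤ ℓ` the term would be `C(ℓ, k) ≠ 0`.
theorem sum_choose_mul_choose_sub {N n ℓ : ℕ} (hℓn : ℓ ≤ n) (hℓN : ℓ ≤ N) :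
    ∑ k ∈ range (ℓ + 1), ℓ.choose k * (N - ℓ).choose (n - k) = N.choose n := by
  rw [← Nat.add_sub_cancel' hℓN, Nat.add_choose_eq, Nat.add_sub_cancel_left,
    Nat.sum_antidiagonal_eq_sum_range_succ (fun i j => ℓ.choose i * (N - ℓ).choose j)]
  refine sum_subset (range_subset_range.mpr (by omega)) fun k _ hk => ?_
  rw [Nat.choose_eq_zero_of_lt (by simpa using hk), zero_mul]

theorem sum_hgP_eq_one {N n ℓ : ℕ} (hℓn : ℓ ≤ n) (hnN : n ≤ N) :
    ∑ k ∈ range (ℓ + 1), hgP N n ℓ k = 1 := by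
  have hD : (N.choose n : ℝ) ≠ 0 := by exact_mod_cast (Nat.choose_pos hnN).ne'
  simp only [hgP, ← sum_div]
  rw [div_eq_one_iff_eq hD]
  exact_mod_cast sum_choose_mul_choose_sub hℓn (hℓn.trans hnN)

theorem hgP_two_mul_sub {n ℓ k : ℕ} (h : ℓ ≤ n) (hk : k ≤ ℓ) :
    hgP (2 * n) n ℓ (ℓ - k) = hgP (2 * n) n ℓ k := by
  rw [hgP, hgP, Nat.choose_symm hk,
    Nat.choose_symm_of_eq_add (show 2 * n - ℓ = n - (ℓ - k) + (n - k) by omega)]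

theorem hgMean_two_mul {n ℓ : ℕ} (h : ℓ ≤ n) : hgMean (2 * n) n ℓ = ℓ / 2 := by
  have hrefl : hgMean (2 * n) n ℓ = ∑ k ∈ range (ℓ + 1), ((ℓ : ℝ) - k) * hgP (2 * n) n ℓ k := by
    rw [hgMean, ← sum_range_reflect]
    refine sum_congr rfl fun k hk => ?_
    have hk : k ≤ ℓ := Nat.lt_succ_iff.mp (mem_range.mp hk)
    rw [Nat.add_sub_cancel, Nat.cast_sub hk, hgP_two_mul_sub h hk]
  have hsum := sum_hgP_eq_one (N := 2 * n) h (by omega)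
  simp only [sub_mul, sum_sub_distrib, ← mul_sum, hsum] at hrefl
  rw [hgMean] at hrefl ⊢
  linarith

theorem hgP_two_mul_le {n ℓ : ℕ} (h : ℓ ≤ n) (k : ℕ) :
    hgP (2 * n) n ℓ k ≤ √2 * (ℓ.choose k / 2 ^ ℓ) := by
  have hD : (0 : ℝ) < (2 * n).choose n := by exact_mod_cast Nat.choose_pos (by omega)
  have key : (2 : ℝ) ^ ℓ * (2 * n - ℓ).choose (n - k) ≤ √2 * (2 * n).choose n := by
    rw [← sqrt_sq hD.le, ← sqrt_mul zero_le_two]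
    refine le_sqrt_of_sq_le ?_
    calc ((2 : ℝ) ^ ℓ * (2 * n - ℓ).choose (n - k)) ^ 2
        ≤ ((2 : ℝ) ^ ℓ * (2 * n - ℓ).choose ((2 * n - ℓ) / 2)) ^ 2 := by
          gcongr; exact_mod_cast Nat.choose_le_middle _ _
      _ = ((4 ^ ℓ * (2 * n - ℓ).choose ((2 * n - ℓ) / 2) ^ 2 : ℕ) : ℝ) := by
          push_cast; rw [mul_pow, ← pow_mul, mul_comm ℓ, pow_mul]; norm_num
      _ ≤ ((2 * Nat.centralBinom n ^ 2 : ℕ) : ℝ) := by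
          exact_mod_cast Nat.four_pow_mul_choose_half_sq_le h
      _ = 2 * ((2 * n).choose n) ^ 2 := by
          rw [Nat.centralBinom_eq_two_mul_choose]; push_cast; ring
  rw [hgP, div_le_iff₀ hD, mul_div_assoc', div_mul_eq_mul_div, le_div_iff₀ (by positivity)]
  calc (ℓ.choose k : ℝ) * (2 * n - ℓ).choose (n - k) * 2 ^ ℓ
      = ℓ.choose k * (2 ^ ℓ * (2 * n - ℓ).choose (n - k)) := by ring
    _ ≤ ℓ.choose k * (√2 * (2 * n).choose n) := by gcongr
    _ = √2 * ℓ.choose k * (2 * n).choose n := by ring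

theorem stmt5 (n ℓ : ℕ) (h1 : 1 ≤ ℓ) (h2 : ℓ ≤ n) (p : ℝ) (hp : 2 ≤ p) :
    hgCentralMoment (2 * n) n ℓ p ≤ Real.sqrt 2 * (p * ℓ / 4) ^ (p / 2) := by
  rw [hgCentralMoment, hgMean_two_mul h2]
  calc ∑ k ∈ range (ℓ + 1), |(k : ℝ) - ℓ / 2| ^ p * hgP (2 * n) n ℓ k
      ≤ ∑ k ∈ range (ℓ + 1), |(k : ℝ) - ℓ / 2| ^ p * (√2 * (ℓ.choose k / 2 ^ ℓ)) := by
        gcongr with k; exact hgP_two_mul_le h2 k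
    _ = √2 * ∑ k ∈ range (ℓ + 1), |(k : ℝ) - ℓ / 2| ^ p * (ℓ.choose k / 2 ^ ℓ) := by
        rw [mul_sum]; exact sum_congr rfl fun k _ => by ring
    _ ≤ √2 * (p * ℓ / 4) ^ (p / 2) := by
        gcongr; exact sum_abs_sub_half_rpow_mul_choose_le h1 hp
end

section
/- The sequence n ↦ √(πn) · C(2n, n) / 4^n is monotone increasing in the positive integer n. -/
/-! Since `C(2n+2, n+1) / 4^(n+1) = (2n+1)/(2n+2) · C(2n, n) / 4^n`, the ratio of the squares of
consecutive terms is `(2n+1)² / (4n(n+1)) ≥ 1`. -/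

open Real

lemma centralBinom_succ_div_four_pow (k : ℕ) :
    ((k + 1).centralBinom : ℝ) / 4 ^ (k + 1) =
      (2 * k + 1) / (2 * k + 2) * (k.centralBinom / 4 ^ k) := by
  have hrec : ((k : ℝ) + 1) * (k + 1).centralBinom = 2 * (2 * k + 1) * k.centralBinom := by
    exact_mod_cast Nat.succ_mul_centralBinom_succ k
  field_simp
  linear_combination 2 * (4 : ℝ) ^ k * hrec

lemma le_add_one_mul_two_mul_add_one_div_sq (x : ℝ) (hx : 0 ≤ x) :
    x ≤ (x + 1) * ((2 * x + 1) / (2 * x + 2)) ^ 2 := by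
  rw [div_pow, ← mul_div_assoc, le_div_iff₀ (by positivity)]
  nlinarith

theorem monotone_sqrt_pi_mul_centralBinom_div_four_pow :
    Monotone fun n : ℕ => √(π * n) * n.centralBinom / 4 ^ n := by
  refine monotone_nat_of_le_succ fun k => ?_
  simp only [mul_div_assoc, centralBinom_succ_div_four_pow]
  set c : ℝ := k.centralBinom / 4 ^ k
  set r : ℝ := (2 * k + 1) / (2 * k + 2)
  rw [← pow_le_pow_iff_left₀ (by positivity) (by positivity) two_ne_zero, mul_pow, mul_pow,
    mul_pow, sq_sqrt (by positivity), sq_sqrt (by positivity)]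
  push_cast
  calc π * k * c ^ 2 ≤ π * ((k + 1) * r ^ 2) * c ^ 2 := by
        gcongr; exact le_add_one_mul_two_mul_add_one_div_sq k k.cast_nonneg
    _ = π * (k + 1) * (r ^ 2 * c ^ 2) := by ring

theorem stmt10_general (n m : ℕ) (hnm : n ≤ m) :
    Real.sqrt (Real.pi * n) * ((2 * n).choose n : ℝ) / 4 ^ n ≤
      Real.sqrt (Real.pi * m) * ((2 * m).choose m : ℝ) / 4 ^ m :=
  monotone_sqrt_pi_mul_centralBinom_div_four_pow hnm

theorem stmt10 (n m : ℕ) (hn : 0 < n) (hnm : n ≤ m) :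
    Real.sqrt (Real.pi * n) * ((2 * n).choose n : ℝ) / 4 ^ n ≤
      Real.sqrt (Real.pi * m) * ((2 * m).choose m : ℝ) / 4 ^ m :=
  stmt10_general n m hnm
end

section
/- Let n be a positive integer and let ℓ, k be integers with 1 ≤ ℓ ≤ n and 0 ≤ k ≤ ℓ. Then C(2n − ℓ, n − k) / C(2n, n) ≤ 2 / 2^ℓ ≤ 1. In particular, C(2n − ℓ, n − k) ≤ C(2n − ℓ, n − ⌊ℓ/2⌋) and C(2n − ℓ, n − ⌊ℓ/2⌋) / C(2n, n) ≤ 2^{1−ℓ}. -/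
/-!
Put `d m = C(m, ⌊m/2⌋) / 2^m` and `c t = C(2t, t) / 4^t`. Pascal's rule gives
`C(m+1, j) ≤ 2 C(m, ⌊m/2⌋)`, so `d` is antitone; with `m = 2n - ℓ ≥ n` the claim becomes
`d n ≤ 2 d (2n)`. Both sides are values of `c`, as `d m = c ⌈m/2⌉`, and
`c (t+1) / c t = (2t+1)/(2t+2)` makes `t c(t)^2` nondecreasing, whence `c a ≤ 2 c b`
whenever `a ≤ b ≤ 4a`.
-/

noncomputable def normCentralBinom (t : ℕ) : ℝ := t.centralBinom / 4 ^ t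

noncomputable def normMiddleBinom (m : ℕ) : ℝ := m.choose (m / 2) / 2 ^ m

lemma normCentralBinom_pos (t : ℕ) : 0 < normCentralBinom t := by
  have := t.centralBinom_pos
  unfold normCentralBinom
  positivity

lemma normCentralBinom_succ_mul (t : ℕ) :
    normCentralBinom (t + 1) * (2 * t + 2) = normCentralBinom t * (2 * t + 1) := by
  have h : ((t : ℝ) + 1) * (t + 1).centralBinom = 2 * (2 * t + 1) * t.centralBinom := by
    exact_mod_cast Nat.succ_mul_centralBinom_succ t
  unfold normCentralBinom
  rw [pow_succ]
  field_simp
  linear_combination 2 * h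

lemma monotone_mul_normCentralBinom_sq :
    Monotone fun t : ℕ => (t : ℝ) * normCentralBinom t ^ 2 := by
  refine monotone_nat_of_le_succ fun t => ?_
  have h := normCentralBinom_succ_mul t
  set x := normCentralBinom t
  set y := normCentralBinom (t + 1)
  have key : 4 * ((t : ℝ) + 1) * (((t : ℝ) + 1) * y ^ 2 - t * x ^ 2) = x ^ 2 := by
    linear_combination (y * (2 * t + 2) + x * (2 * t + 1)) * h
  push_cast
  nlinarith [sq_nonneg x]

lemma normCentralBinom_le_two_mul {a b : ℕ} (hab : a ≤ b) (hb : b ≤ 4 * a) :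
    normCentralBinom a ≤ 2 * normCentralBinom b := by
  have hca := normCentralBinom_pos a
  have hcb := normCentralBinom_pos b
  rcases a.eq_zero_or_pos with rfl | ha
  · obtain rfl : b = 0 := by omega
    linarith
  have hmono : (a : ℝ) * normCentralBinom a ^ 2 ≤ b * normCentralBinom b ^ 2 :=
    monotone_mul_normCentralBinom_sq hab
  have hb' : (b : ℝ) ≤ 4 * a := by exact_mod_cast hb
  have ha' : (0 : ℝ) < a := by exact_mod_cast ha
  have hsq : normCentralBinom a ^ 2 ≤ (2 * normCentralBinom b) ^ 2 := by
    refine le_of_mul_le_mul_left ?_ ha'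
    nlinarith [sq_nonneg (normCentralBinom b)]
  exact (pow_le_pow_iff_left₀ hca.le (by positivity) two_ne_zero).mp hsq

lemma Nat.choose_succ_le_two_mul_choose_half (m k : ℕ) :
    (m + 1).choose k ≤ 2 * m.choose (m / 2) := by
  cases k with
  | zero =>
    have := Nat.choose_pos (Nat.div_le_self m 2)
    simp only [Nat.choose_zero_right]
    omega
  | succ j =>
    rw [Nat.choose_succ_succ, two_mul]
    exact Nat.add_le_add (Nat.choose_le_middle j m) (Nat.choose_le_middle (j + 1) m)

lemma antitone_normMiddleBinom : Antitone normMiddleBinom := by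
  refine antitone_nat_of_succ_le fun m => ?_
  have h : ((m + 1).choose ((m + 1) / 2) : ℝ) ≤ 2 * m.choose (m / 2) := by
    exact_mod_cast Nat.choose_succ_le_two_mul_choose_half m _
  unfold normMiddleBinom
  rw [pow_succ, div_le_div_iff₀ (by positivity) (by positivity)]
  nlinarith [pow_pos (two_pos : (0 : ℝ) < 2) m]

lemma Nat.two_mul_choose_eq_centralBinom_succ (t : ℕ) :
    2 * (2 * t + 1).choose t = (t + 1).centralBinom := by
  rw [Nat.centralBinom, show 2 * (t + 1) = 2 * t + 1 + 1 by ring, Nat.choose_succ_succ,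
    Nat.choose_symm_half, two_mul]

lemma normMiddleBinom_eq (m : ℕ) : normMiddleBinom m = normCentralBinom ((m + 1) / 2) := by
  unfold normMiddleBinom normCentralBinom
  obtain ⟨t, rfl | rfl⟩ := Nat.even_or_odd' m
  · rw [show (2 * t + 1) / 2 = t by omega, Nat.mul_div_cancel_left t two_pos,
      Nat.centralBinom_eq_two_mul_choose, pow_mul]
    norm_num
  · rw [show (2 * t + 1 + 1) / 2 = t + 1 by omega, show (2 * t + 1) / 2 = t by omega,
      ← Nat.two_mul_choose_eq_centralBinom_succ, pow_succ, pow_mul]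
    push_cast
    field_simp
    ring

lemma normMiddleBinom_le_two_mul {n m : ℕ} (hnm : n ≤ m) :
    normMiddleBinom m ≤ 2 * normMiddleBinom (2 * n) :=
  calc normMiddleBinom m ≤ normMiddleBinom n := antitone_normMiddleBinom hnm
    _ = normCentralBinom ((n + 1) / 2) := normMiddleBinom_eq n
    _ ≤ 2 * normCentralBinom n := normCentralBinom_le_two_mul (by omega) (by omega)
    _ = 2 * normMiddleBinom (2 * n) := by
      rw [normMiddleBinom_eq, show (2 * n + 1) / 2 = n by omega]

lemma choose_middle_div_choose_two_mul_self_le {n ℓ : ℕ} (hℓ : ℓ ≤ n) :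
    ((2 * n - ℓ).choose ((2 * n - ℓ) / 2) : ℝ) / (2 * n).choose n ≤ 2 / 2 ^ ℓ := by
  have h := normMiddleBinom_le_two_mul (show n ≤ 2 * n - ℓ by omega)
  have hpow : (2 : ℝ) ^ (2 * n) = 2 ^ (2 * n - ℓ) * 2 ^ ℓ := by
    rw [← pow_add, Nat.sub_add_cancel (by omega)]
  have hC : (0 : ℝ) < (2 * n).choose n := by exact_mod_cast Nat.choose_pos (by omega)
  unfold normMiddleBinom at h
  rw [Nat.mul_div_cancel_left n two_pos, hpow] at h
  rw [div_le_div_iff₀ hC (by positivity)]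
  field_simp at h
  linarith

lemma Nat.choose_sub_half_eq_choose_half {n ℓ : ℕ} (hℓ : ℓ ≤ 2 * n) :
    (2 * n - ℓ).choose (n - ℓ / 2) = (2 * n - ℓ).choose ((2 * n - ℓ) / 2) := by
  rw [show n - ℓ / 2 = 2 * n - ℓ - (2 * n - ℓ) / 2 by omega,
    Nat.choose_symm (Nat.div_le_self _ _)]

theorem stmt11_general (n ℓ k : ℕ) (h1 : 1 ≤ ℓ) (h2 : ℓ ≤ n) :
    (((2 * n - ℓ).choose (n - k) : ℝ) / (((2 * n).choose n : ℝ)) ≤ 2 / 2 ^ ℓ ∧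
        (2 : ℝ) / 2 ^ ℓ ≤ 1) ∧
      (2 * n - ℓ).choose (n - k) ≤ (2 * n - ℓ).choose (n - ℓ / 2) ∧
        ((2 * n - ℓ).choose (n - ℓ / 2) : ℝ) / (((2 * n).choose n : ℝ)) ≤
          (2 : ℝ) ^ (1 - (ℓ : ℤ)) := by
  have hmid := Nat.choose_sub_half_eq_choose_half (n := n) (ℓ := ℓ) (by omega)
  have hle : (2 * n - ℓ).choose (n - k) ≤ (2 * n - ℓ).choose (n - ℓ / 2) :=
    hmid ▸ Nat.choose_le_middle _ _
  have hkey : ((2 * n - ℓ).choose (n - ℓ / 2) : ℝ) / (2 * n).choose n ≤ 2 / 2 ^ ℓ :=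
    hmid ▸ choose_middle_div_choose_two_mul_self_le h2
  have hC : (0 : ℝ) < (2 * n).choose n := by exact_mod_cast Nat.choose_pos (by omega)
  refine ⟨⟨(div_le_div_of_nonneg_right (by exact_mod_cast hle) hC.le).trans hkey, ?_⟩, hle, ?_⟩
  · rw [div_le_one (by positivity)]
    simpa using pow_le_pow_right₀ one_le_two h1
  · rwa [zpow_sub₀ two_ne_zero, zpow_one, zpow_natCast]

theorem stmt11 (n ℓ k : ℕ) (h1 : 1 ≤ ℓ) (h2 : ℓ ≤ n) (hk : k ≤ ℓ) :
    (((2 * n - ℓ).choose (n - k) : ℝ) / (((2 * n).choose n : ℝ)) ≤ 2 / 2 ^ ℓ ∧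
        (2 : ℝ) / 2 ^ ℓ ≤ 1) ∧
      (2 * n - ℓ).choose (n - k) ≤ (2 * n - ℓ).choose (n - ℓ / 2) ∧
        ((2 * n - ℓ).choose (n - ℓ / 2) : ℝ) / (((2 * n).choose n : ℝ)) ≤
          (2 : ℝ) ^ (1 - (ℓ : ℤ)) :=
  stmt11_general n ℓ k h1 h2
end

section
/- Let N be a positive integer and let Π_N be the group of permutations of {1, ..., N} equipped with the uniform probability measure μ and the metric d_N(σ, π) = #{i : σ(i) ≠ π(i)}. Let f : Π_N → ℝ be 1-Lipschitz with respect to d_N. Then for all t > 0, μ({σ : |f(σ) − E f| ≥ t}) ≤ 2 e^{−t²/(32 N)}. -/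
/-- The Hamming-type distance `d_N(σ, π) = #{i : σ(i) ≠ π(i)}` on `Π_N`. -/
def dPerm (N : ℕ) (σ π : Equiv.Perm (Fin N)) : ℕ :=
  (Finset.univ.filter fun i => σ i ≠ π i).card

open Finset Equiv Equiv.Perm MeasureTheory ProbabilityTheory
open scoped BigOperators NNReal

section
open Real
variable {α : Type*} [Fintype α]

lemma expect_eq_integral_uniformOn [MeasurableSpace α] [MeasurableSingletonClass α]
    (f : α → ℝ) : 𝔼 x, f x = ∫ x, f x ∂uniformOn Set.univ := by
  rw [integral_fintype .of_finite, Fintype.expect_eq_sum_div_card, Finset.sum_div]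
  refine Finset.sum_congr rfl fun x _ => ?_
  simp [measureReal_def, uniformOn_univ, div_eq_inv_mul]

lemma hasSubgaussianMGF_uniformOn_iff [MeasurableSpace α] [MeasurableSingletonClass α]
    (X : α → ℝ) (c : ℝ≥0) :
    HasSubgaussianMGF X c (uniformOn Set.univ) ↔
      ∀ L : ℝ, 𝔼 x, exp (L * X x) ≤ exp (c * L ^ 2 / 2) := by
  have hmgf (L : ℝ) : mgf X (uniformOn Set.univ) L = 𝔼 x, exp (L * X x) := by
    rw [mgf, expect_eq_integral_uniformOn]
  exact ⟨fun h L => hmgf L ▸ h.mgf_le L,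
    fun h => ⟨fun _ => .of_finite, fun L => (hmgf L).symm ▸ h L⟩⟩

lemma expect_exp_mul_sub_expect_le_of_mem_Icc [Nonempty α] {X : α → ℝ} {a b : ℝ}
    (hX : ∀ x, X x ∈ Set.Icc a b) (L : ℝ) :
    𝔼 x, exp (L * (X x - 𝔼 y, X y)) ≤ exp ((b - a) ^ 2 / 8 * L ^ 2) := by
  let _ : MeasurableSpace α := ⊤
  have : DiscreteMeasurableSpace α := ⟨fun _ => trivial⟩
  have h := hasSubgaussianMGF_of_mem_Icc (μ := uniformOn Set.univ) (X := X) .of_discrete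
    (ae_of_all _ hX)
  rw [← expect_eq_integral_uniformOn] at h
  refine ((hasSubgaussianMGF_uniformOn_iff _ _).1 h L).trans_eq ?_
  congr 1
  simp only [NNReal.coe_pow, NNReal.coe_div, coe_nnnorm, norm_eq_abs, NNReal.coe_ofNat]
  rw [div_pow, sq_abs]
  ring

lemma card_filter_ge_div_card_le {X : α → ℝ} {c : ℝ≥0}
    (hX : ∀ L : ℝ, 𝔼 x, exp (L * X x) ≤ exp (c * L ^ 2 / 2)) {t : ℝ} (ht : 0 ≤ t) :
    (#{x | t ≤ X x} : ℝ) / Fintype.card α ≤ exp (-t ^ 2 / (2 * c)) := by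
  let _ : MeasurableSpace α := ⊤
  have : DiscreteMeasurableSpace α := ⟨fun _ => trivial⟩
  classical
  have h := ((hasSubgaussianMGF_uniformOn_iff X c).2 hX).measure_ge_le ht
  convert h using 1
  have hset : {x | t ≤ X x} = ((univ.filter fun x => t ≤ X x : Finset α) : Set α) := by
    simp
  rw [measureReal_def, uniformOn_univ, hset, Measure.count_apply_finset, ENNReal.toReal_div]
  simp

lemma card_filter_abs_ge_div_card_le {X : α → ℝ} {c : ℝ≥0}
    (hX : ∀ L : ℝ, 𝔼 x, exp (L * X x) ≤ exp (c * L ^ 2 / 2)) {t : ℝ} (ht : 0 ≤ t) :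
    (#{x | t ≤ |X x|} : ℝ) / Fintype.card α ≤ 2 * exp (-t ^ 2 / (2 * c)) := by
  have hneg (L : ℝ) : 𝔼 x, exp (L * -X x) ≤ exp (c * L ^ 2 / 2) := by
    simpa only [mul_neg, neg_mul, neg_sq] using hX (-L)
  have hcard : #{x | t ≤ |X x|} ≤ #{x | t ≤ X x} + #{x | t ≤ -X x} := by
    classical
    refine (card_le_card fun x hx => ?_).trans (card_union_le _ _)
    simpa [le_abs] using hx
  calc (#{x | t ≤ |X x|} : ℝ) / Fintype.card α
      ≤ (#{x | t ≤ X x} + #{x | t ≤ -X x} : ℕ) / Fintype.card α := by gcongr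
    _ ≤ exp (-t ^ 2 / (2 * c)) + exp (-t ^ 2 / (2 * c)) := by
      rw [Nat.cast_add, add_div]
      exact add_le_add (card_filter_ge_div_card_le hX ht) (card_filter_ge_div_card_le hneg ht)
    _ = 2 * exp (-t ^ 2 / (2 * c)) := (two_mul _).symm

lemma Fintype.expect_prod_type {ι κ : Type*} [Fintype ι] [Fintype κ] (F : ι × κ → ℝ) :
    𝔼 x, F x = 𝔼 i, 𝔼 k, F (i, k) := by
  rw [← univ_product_univ, expect_product]

lemma expect_exp_mul_sub_expect_prod_le {ι κ : Type*} [Fintype ι] [Nonempty ι] [Fintype κ]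
    [Nonempty κ] (F : ι × κ → ℝ) {b c L : ℝ}
    (hfiber : ∀ i, 𝔼 k, exp (L * (F (i, k) - 𝔼 k', F (i, k'))) ≤ exp c)
    (hshift : ∀ i j k, |F (i, k) - F (j, k)| ≤ b) :
    𝔼 x, exp (L * (F x - 𝔼 y, F y)) ≤ exp (c + b ^ 2 / 8 * L ^ 2) := by
  set a : ι → ℝ := fun i => 𝔼 k, F (i, k)
  have ha : ∀ i j, a i - a j ≤ b := fun i j => calc
    a i - a j = 𝔼 k, (F (i, k) - F (j, k)) := (expect_sub_distrib _ _ _).symm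
    _ ≤ 𝔼 k, |F (i, k) - F (j, k)| := (le_abs_self _).trans (abs_expect_le _ _)
    _ ≤ b := (expect_le_expect fun k _ => hshift i j k).trans_eq (Fintype.expect_const b)
  obtain ⟨i₀, -, hi₀⟩ := exists_min_image univ a univ_nonempty
  have ha_mem : ∀ i, a i ∈ Set.Icc (a i₀) (a i₀ + b) := fun i =>
    ⟨hi₀ i (mem_univ i), by linarith [ha i i₀]⟩
  calc 𝔼 x, exp (L * (F x - 𝔼 y, F y))
      = 𝔼 i, exp (L * (a i - 𝔼 j, a j)) * 𝔼 k, exp (L * (F (i, k) - a i)) := by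
        rw [show 𝔼 y, F y = 𝔼 i, a i from Fintype.expect_prod_type F, Fintype.expect_prod_type]
        refine expect_congr rfl fun i _ => ?_
        rw [mul_expect]
        refine expect_congr rfl fun k _ => ?_
        rw [← exp_add]
        congr 1
        ring
    _ ≤ 𝔼 i, exp (L * (a i - 𝔼 j, a j)) * exp c :=
        expect_le_expect fun i _ => mul_le_mul_of_nonneg_left (hfiber i) (exp_nonneg _)
    _ ≤ exp (b ^ 2 / 8 * L ^ 2) * exp c := by
        rw [← expect_mul]
        refine mul_le_mul_of_nonneg_right ?_ (exp_nonneg _)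
        simpa using expect_exp_mul_sub_expect_le_of_mem_Icc ha_mem L
    _ = exp (c + b ^ 2 / 8 * L ^ 2) := by rw [← exp_add, add_comm]

lemma EPi_eq_expect (N : ℕ) (g : Perm (Fin N) → ℝ) : EPi N g = 𝔼 σ, g σ :=
  (Fintype.expect_eq_sum_div_card g).symm

lemma dPerm_decomposeFin_symm_of_fst_eq (n : ℕ) (p : Fin (n + 1)) (e e' : Perm (Fin n)) :
    dPerm (n + 1) (decomposeFin.symm (p, e)) (decomposeFin.symm (p, e')) = dPerm n e e' := by
  simp only [dPerm, card_filter, Fin.sum_univ_succ, decomposeFin_symm_apply_zero,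
    decomposeFin_symm_apply_succ, ne_eq, (swap 0 p).apply_eq_iff_eq, Fin.succ_inj]
  simp

lemma dPerm_decomposeFin_symm_of_snd_eq_le (n : ℕ) (p q : Fin (n + 1)) (e : Perm (Fin n)) :
    dPerm (n + 1) (decomposeFin.symm (p, e)) (decomposeFin.symm (q, e)) ≤ 3 := by
  set σ := decomposeFin.symm (p, e)
  have hsub : ({i | σ i ≠ decomposeFin.symm (q, e) i} : Finset (Fin (n + 1))) ⊆
      {0, σ.symm 0, σ.symm (swap 0 p q)} := by
    intro i hi
    -- at `x.succ` the two permutations differ only if `(e x).succ` is `p` or `q`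
    induction i using Fin.cases with
    | zero => simp
    | succ x =>
      simp only [mem_filter, mem_univ, true_and, σ, decomposeFin_symm_apply_succ] at hi
      simp only [mem_insert, mem_singleton, eq_symm_apply, σ, decomposeFin_symm_apply_succ]
      have hy : (e x).succ ≠ 0 := Fin.succ_ne_zero _
      generalize (e x).succ = y at hi hy ⊢
      by_cases hp : y = p
      · simp [hp]
      by_cases hq : y = q
      · simp [hq]
      rw [swap_apply_of_ne_of_ne hy hp, swap_apply_of_ne_of_ne hy hq] at hi
      exact absurd rfl hi
  exact (card_le_card hsub).trans card_le_three

lemma expect_exp_mul_sub_expect_le_of_lipschitz (n : ℕ) (f : Perm (Fin n) → ℝ)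
    (hf : ∀ σ τ, |f σ - f τ| ≤ dPerm n σ τ) (L : ℝ) :
    𝔼 σ, exp (L * (f σ - 𝔼 τ, f τ)) ≤ exp (9 / 8 * n * L ^ 2) := by
  induction n with
  | zero => simp [Subsingleton.elim _ (1 : Perm (Fin 0))]
  | succ n ih =>
    let F : Fin (n + 1) × Perm (Fin n) → ℝ := fun x => f (decomposeFin.symm x)
    have hF : ∀ g : Perm (Fin (n + 1)) → ℝ, 𝔼 σ, g σ = 𝔼 x, g (decomposeFin.symm x) :=
      fun g => Fintype.expect_equiv decomposeFin _ _ fun σ => by simp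
    have hfiber (p : Fin (n + 1)) : 𝔼 e, exp (L * (F (p, e) - 𝔼 e', F (p, e'))) ≤
        exp (9 / 8 * n * L ^ 2) :=
      ih _ fun e e' => (hf _ _).trans_eq (by rw [dPerm_decomposeFin_symm_of_fst_eq])
    have hshift (p q : Fin (n + 1)) (e : Perm (Fin n)) : |F (p, e) - F (q, e)| ≤ 3 :=
      (hf _ _).trans (by exact_mod_cast dPerm_decomposeFin_symm_of_snd_eq_le n p q e)
    rw [hF, hF f]
    convert expect_exp_mul_sub_expect_prod_le F hfiber hshift using 2
    push_cast
    ring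

end

theorem stmt15_general (N : ℕ) (f : Equiv.Perm (Fin N) → ℝ)
    (hf : ∀ σ π : Equiv.Perm (Fin N), |f σ - f π| ≤ (dPerm N σ π : ℝ)) (t : ℝ) (ht : 0 < t) :
    ((Finset.univ.filter fun σ : Equiv.Perm (Fin N) => t ≤ |f σ - EPi N f|).card : ℝ) /
        (Fintype.card (Equiv.Perm (Fin N)) : ℝ) ≤
      2 * Real.exp (-t ^ 2 / (32 * N)) := by
  have hmgf (L : ℝ) : 𝔼 σ, Real.exp (L * (f σ - EPi N f)) ≤
      Real.exp (((9 / 4 * N : ℝ≥0) : ℝ) * L ^ 2 / 2) := by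
    rw [EPi_eq_expect]
    convert expect_exp_mul_sub_expect_le_of_lipschitz N f hf L using 2
    push_cast
    ring
  refine (card_filter_abs_ge_div_card_le hmgf ht.le).trans
    (mul_le_mul_of_nonneg_left (Real.exp_le_exp.2 ?_) zero_le_two)
  have hx : 0 ≤ t ^ 2 / (32 * N) := by positivity
  rw [show -t ^ 2 / (2 * ((9 / 4 * N : ℝ≥0) : ℝ)) = -(64 / 9) * (t ^ 2 / (32 * N)) by
    push_cast; ring, neg_div]
  linarith

theorem stmt15 (N : ℕ) (hN : 0 < N) (f : Equiv.Perm (Fin N) → ℝ)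
    (hf : ∀ σ π : Equiv.Perm (Fin N), |f σ - f π| ≤ (dPerm N σ π : ℝ)) (t : ℝ) (ht : 0 < t) :
    ((Finset.univ.filter fun σ : Equiv.Perm (Fin N) => t ≤ |f σ - EPi N f|).card : ℝ) /
        (Fintype.card (Equiv.Perm (Fin N)) : ℝ) ≤
      2 * Real.exp (-t ^ 2 / (32 * N)) :=
  stmt15_general N f hf t ht
end
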